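/- arXiv:0910.0610 — 4 statements merged into one kernel-verified Lean document; each statement's English description precedes it below -/
import Mathlib

section
/- Let X be a Euclidean (real inner product) space and let f : X → ℝ ∪ {∞} be a closed (lower semicontinuous) convex function, and let β > 0. Then f is β-strongly convex with respect to a norm ‖·‖ on X if and only if its Fenchel conjugate f* is (1/β)-strongly smooth with respect to the dual norm ‖·‖*. -/
open scoped BigOperators
open RealInnerProductSpace

/-- `N` is a norm on the real vector space `V`. -/
def IsNormOn {V : Type*} [AddCommGroup V] [Module ℝ V] (N : V → ℝ) : Prop :=
  (∀ x, 0 ≤ N x) ∧ (∀ x, N x = 0 → x = 0) ∧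
    (∀ (c : ℝ) (x : V), N (c • x) = |c| * N x) ∧ ∀ x y, N (x + y) ≤ N x + N y

variable {X : Type*} [NormedAddCommGroup X] [InnerProductSpace ℝ X]

/-- The dual norm of `N` with respect to the inner product:
`‖y‖⋆ = sup { ⟪x, y⟫ : N x ≤ 1 }`. -/
noncomputable def dualNorm (N : X → ℝ) (y : X) : ℝ :=
  sSup {r : ℝ | ∃ x : X, N x ≤ 1 ∧ r = ⟪x, y⟫}

/-- The Fenchel conjugate `f⋆(y) = sup_x (⟪x, y⟫ - f x)` of an extended-real-valued `f`. -/
noncomputable def fenchelConj (f : X → EReal) (y : X) : EReal :=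
  ⨆ x : X, ((⟪x, y⟫ : ℝ) : EReal) - f x

/-- `f` is convex (with values in `ℝ ∪ {∞}`). -/
def ERealConvexOn (f : X → EReal) : Prop :=
  ∀ (x y : X) (α : ℝ), 0 ≤ α → α ≤ 1 →
    f (α • x + (1 - α) • y) ≤ (α : EReal) * f x + ((1 - α : ℝ) : EReal) * f y

/-- `f` is `β`-strongly convex w.r.t. the norm `N`: for all `x, y` in the relative interior
of the domain of `f` and all `α ∈ (0,1)`,
`f(αx + (1-α)y) ≤ α f x + (1-α) f y - (β/2) α (1-α) N(x-y)²`. -/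
def EStrongConvexOn (N : X → ℝ) (β : ℝ) (f : X → EReal) : Prop :=
  ∀ x ∈ intrinsicInterior ℝ {z : X | f z ≠ ⊤}, ∀ y ∈ intrinsicInterior ℝ {z : X | f z ≠ ⊤},
    ∀ α : ℝ, 0 < α → α < 1 →
      f (α • x + (1 - α) • y) ≤
        (α : EReal) * f x + ((1 - α : ℝ) : EReal) * f y
          - ((β / 2 * α * (1 - α) * N (x - y) ^ 2 : ℝ) : EReal)

/-- `g` is `β`-strongly smooth w.r.t. a norm `Nd`: `g` is everywhere differentiable and
`g(x+y) ≤ g x + ⟪∇g x, y⟫ + (β/2) Nd(y)²`. -/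
def StronglySmoothOn [CompleteSpace X] (Nd : X → ℝ) (β : ℝ) (g : X → ℝ) : Prop :=
  Differentiable ℝ g ∧
    ∀ x y : X, g (x + y) ≤ g x + ⟪gradient g x, y⟫ + β / 2 * Nd y ^ 2

/-!
Forward: strong convexity makes `x ↦ f x - ⟪x, y⟫` coercive, so the supremum defining `f⋆ y` is
attained at some `x_y`, around which `f` grows quadratically. Then
`f⋆ y + ⟪x_y, d⟫ ≤ f⋆ (y + d) ≤ f⋆ y + ⟪x_y, d⟫ + ‖d‖⋆² / 2β`, so `∇f⋆ y = x_y` and `f⋆` is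
`1/β`-smooth.

Backward: by the Fenchel–Moreau theorem `f` is the supremum of `x ↦ ⟪x, v⟫ - f⋆ v`. Applying the
smoothness of `f⋆` at `v` in two opposite directions along a support functional of `x - y` bounds
each of these at `αx + (1 - α)y` by the right-hand side of the strong convexity inequality.
-/

open Filter Topology

namespace IsNormOn

variable {V : Type*} [AddCommGroup V] [Module ℝ V] {N : V → ℝ}

theorem map_zero (hN : IsNormOn N) : N 0 = 0 := by
  simpa using hN.2.2.1 0 0

theorem map_neg (hN : IsNormOn N) (x : V) : N (-x) = N x := by
  simpa using hN.2.2.1 (-1) x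

theorem convexOn (hN : IsNormOn N) : ConvexOn ℝ Set.univ N := by
  refine ⟨convex_univ, fun x _ y _ a b ha hb _ => ?_⟩
  calc N (a • x + b • y) ≤ N (a • x) + N (b • y) := hN.2.2.2 _ _
    _ = a • N x + b • N y := by
      rw [hN.2.2.1, hN.2.2.1, abs_of_nonneg ha, abs_of_nonneg hb, smul_eq_mul, smul_eq_mul]

variable {X : Type*} [NormedAddCommGroup X] [InnerProductSpace ℝ X] [FiniteDimensional ℝ X]
  {N : X → ℝ}

theorem continuous (hN : IsNormOn N) : Continuous N :=
  continuousOn_univ.1 (hN.convexOn.continuousOn isOpen_univ)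

theorem exists_pos_mul_norm_le (hN : IsNormOn N) : ∃ m > 0, ∀ x, m * ‖x‖ ≤ N x := by
  rcases subsingleton_or_nontrivial X with hX | hX
  · exact ⟨1, one_pos, fun x => by simp [Subsingleton.elim x 0, hN.map_zero]⟩
  obtain ⟨z, hz, hzmin⟩ := (isCompact_sphere (0 : X) 1).exists_isMinOn
    (NormedSpace.sphere_nonempty.2 zero_le_one) hN.continuous.continuousOn
  have hz0 : z ≠ 0 := ne_zero_of_mem_unit_sphere ⟨z, hz⟩
  have hm : 0 < N z := (hN.1 z).lt_of_ne fun h => hz0 (hN.2.1 z h.symm)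
  refine ⟨N z, hm, fun x => ?_⟩
  rcases eq_or_ne x 0 with rfl | hx
  · simp [hN.map_zero]
  have hxn : 0 < ‖x‖ := norm_pos_iff.2 hx
  have hunit : ‖x‖⁻¹ • x ∈ Metric.sphere (0 : X) 1 := by
    simp [norm_smul, hxn.ne']
  calc N z * ‖x‖ ≤ N (‖x‖⁻¹ • x) * ‖x‖ := by gcongr; exact hzmin hunit
    _ = N x := by
      rw [hN.2.2.1, abs_of_pos (inv_pos.2 hxn)]
      field_simp

theorem exists_inner_le_mul_norm (hN : IsNormOn N) :
    ∃ K, ∀ x y : X, N x ≤ 1 → ⟪x, y⟫ ≤ K * ‖y‖ := by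
  obtain ⟨m, hm, hmN⟩ := hN.exists_pos_mul_norm_le
  refine ⟨1 / m, fun x y hx => ?_⟩
  have hxm : ‖x‖ ≤ 1 / m := by rw [le_div_iff₀ hm]; linarith [hmN x]
  calc ⟪x, y⟫ ≤ ‖x‖ * ‖y‖ := real_inner_le_norm x y
    _ ≤ 1 / m * ‖y‖ := by gcongr

end IsNormOn

section DualNorm

variable {X : Type*} [NormedAddCommGroup X] [InnerProductSpace ℝ X] {N : X → ℝ}

theorem dualNorm_le_of_forall_inner_le (hN : IsNormOn N) {y : X} {c : ℝ}
    (h : ∀ x, N x ≤ 1 → ⟪x, y⟫ ≤ c) : dualNorm N y ≤ c :=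
  csSup_le ⟨0, 0, by simp [hN.map_zero]⟩ fun _ ⟨x, hx, hr⟩ => hr ▸ h x hx

variable [FiniteDimensional ℝ X]

theorem bddAbove_dualNorm_set (hN : IsNormOn N) (y : X) :
    BddAbove {r : ℝ | ∃ x : X, N x ≤ 1 ∧ r = ⟪x, y⟫} := by
  obtain ⟨K, hK⟩ := hN.exists_inner_le_mul_norm
  exact ⟨K * ‖y‖, by rintro _ ⟨x, hx, rfl⟩; exact hK x y hx⟩

theorem inner_le_dualNorm_of_le_one (hN : IsNormOn N) {x : X} (hx : N x ≤ 1) (y : X) :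
    ⟪x, y⟫ ≤ dualNorm N y :=
  le_csSup (bddAbove_dualNorm_set hN y) ⟨x, hx, rfl⟩

theorem dualNorm_nonneg (hN : IsNormOn N) (y : X) : 0 ≤ dualNorm N y := by
  simpa using inner_le_dualNorm_of_le_one hN (x := 0) (by simp [hN.map_zero]) y

theorem inner_le_mul_dualNorm (hN : IsNormOn N) (x y : X) : ⟪x, y⟫ ≤ N x * dualNorm N y := by
  rcases (hN.1 x).eq_or_lt with h | h
  · simp [hN.2.1 x h.symm, hN.map_zero]
  have hunit := inner_le_dualNorm_of_le_one hN (x := (N x)⁻¹ • x)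
    (by rw [hN.2.2.1, abs_of_pos (inv_pos.2 h), inv_mul_cancel₀ h.ne']) y
  rwa [real_inner_smul_left, inv_mul_le_iff₀ h] at hunit

theorem abs_inner_le_mul_dualNorm (hN : IsNormOn N) (x y : X) :
    |⟪x, y⟫| ≤ N x * dualNorm N y := by
  have hneg := inner_le_mul_dualNorm hN (-x) y
  rw [inner_neg_left, hN.map_neg] at hneg
  exact abs_le.2 ⟨by linarith, inner_le_mul_dualNorm hN x y⟩

theorem dualNorm_smul_le (hN : IsNormOn N) (c : ℝ) (y : X) :
    dualNorm N (c • y) ≤ |c| * dualNorm N y :=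
  dualNorm_le_of_forall_inner_le hN fun x hx => by
    calc ⟪x, c • y⟫ = c * ⟪x, y⟫ := real_inner_smul_right x y c
      _ ≤ |c| * |⟪x, y⟫| := by rw [← abs_mul]; exact le_abs_self _
      _ ≤ |c| * dualNorm N y := by
        gcongr
        exact (abs_inner_le_mul_dualNorm hN x y).trans
          (mul_le_of_le_one_left (dualNorm_nonneg hN y) hx)

theorem exists_dualNorm_le_mul_norm (hN : IsNormOn N) : ∃ K, ∀ y, dualNorm N y ≤ K * ‖y‖ := by
  obtain ⟨K, hK⟩ := hN.exists_inner_le_mul_norm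
  exact ⟨K, fun y => dualNorm_le_of_forall_inner_le hN fun x hx => hK x y hx⟩

theorem exists_dualNorm_le_one_inner_eq (hN : IsNormOn N) (u : X) :
    ∃ z : X, dualNorm N z ≤ 1 ∧ ⟪u, z⟫ = N u := by
  have hspan : ∀ c : ℝ, c • u = 0 → c • N u = 0 := by
    intro c hc
    rcases smul_eq_zero.1 hc with rfl | rfl
    · simp
    · simp [hN.map_zero]
  obtain ⟨ℓ, hℓu, hℓN⟩ := exists_extension_of_le_sublinear
    (LinearPMap.mkSpanSingleton' (σ := RingHom.id ℝ) u (N u) hspan) N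
    (fun c hc x => by rw [hN.2.2.1, abs_of_pos hc]) hN.2.2.2 (by
      rintro ⟨x, hx⟩
      obtain ⟨c, rfl⟩ := Submodule.mem_span_singleton.1 hx
      rw [LinearPMap.mkSpanSingleton'_apply, hN.2.2.1, smul_eq_mul]
      exact mul_le_mul_of_nonneg_right (le_abs_self c) (hN.1 u))
  set z := (InnerProductSpace.toDual ℝ X).symm (LinearMap.toContinuousLinearMap ℓ)
  have hz : ∀ x, ⟪x, z⟫ = ℓ x := fun x => by
    rw [real_inner_comm, InnerProductSpace.toDual_symm_apply]; rfl
  refine ⟨z, dualNorm_le_of_forall_inner_le hN fun x hx => (hz x ▸ hℓN x).trans hx, ?_⟩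
  rw [hz, ← LinearPMap.mkSpanSingleton'_apply_self (σ := RingHom.id ℝ) u (N u) hspan]
  exact hℓu ⟨u, Submodule.mem_span_singleton_self u⟩

end DualNorm

theorem LowerSemicontinuous.isClosed_epigraph_coe {α : Type*} [TopologicalSpace α]
    {f : α → EReal} (hf : LowerSemicontinuous f) : IsClosed {p : α × ℝ | f p.1 ≤ p.2} :=
  (lowerSemicontinuous_iff_isClosed_epigraph.1 hf).preimage
    (continuous_fst.prodMk (continuous_coe_real_ereal.comp continuous_snd))

section ConvexConjugate

variable {X : Type*} [NormedAddCommGroup X] [InnerProductSpace ℝ X] {f : X → EReal}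

theorem ERealConvexOn.le_coe_of_le (hconv : ERealConvexOn f) {x y : X} {a b : ℝ}
    (hx : f x ≤ a) (hy : f y ≤ b) {α : ℝ} (h0 : 0 ≤ α) (h1 : α ≤ 1) :
    f (α • x + (1 - α) • y) ≤ ((α * a + (1 - α) * b : ℝ) : EReal) := by
  refine (hconv x y α h0 h1).trans ?_
  push_cast
  gcongr
  exact_mod_cast sub_nonneg.2 h1

theorem ERealConvexOn.convex_dom (hfbot : ∀ x, f x ≠ ⊥) (hconv : ERealConvexOn f) :
    Convex ℝ {z : X | f z ≠ ⊤} := by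
  intro x hx y hy a b ha hb hab
  obtain rfl : b = 1 - a := by linarith
  exact ne_top_of_le_ne_top (EReal.coe_ne_top _) (hconv.le_coe_of_le
    (EReal.coe_toReal hx (hfbot x)).ge (EReal.coe_toReal hy (hfbot y)).ge ha (by linarith))

theorem ERealConvexOn.convex_epigraph (hconv : ERealConvexOn f) :
    Convex ℝ {p : X × ℝ | f p.1 ≤ p.2} := by
  intro p hp q hq a b ha hb hab
  obtain rfl : b = 1 - a := by linarith
  exact hconv.le_coe_of_le hp hq ha (by linarith)

theorem fenchelConj_le_coe (hfbot : ∀ x, f x ≠ ⊥) {y : X} {c : ℝ}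
    (h : ∀ x, f x ≠ ⊤ → ⟪x, y⟫ - (f x).toReal ≤ c) : fenchelConj f y ≤ c := by
  refine iSup_le fun x => ?_
  by_cases hx : f x = ⊤
  · simp [hx]
  · rw [← EReal.coe_toReal hx (hfbot x), ← EReal.coe_sub]
    exact_mod_cast h x hx

theorem coe_inner_sub_le_fenchelConj (hfbot : ∀ x, f x ≠ ⊥) {x : X} (hx : f x ≠ ⊤) (y : X) :
    ((⟪x, y⟫ - (f x).toReal : ℝ) : EReal) ≤ fenchelConj f y := by
  rw [EReal.coe_sub, EReal.coe_toReal hx (hfbot x)]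
  exact le_iSup (fun x => ((⟪x, y⟫ : ℝ) : EReal) - f x) x

theorem exists_affine_minorant_of_separation (hfbot : ∀ x, f x ≠ ⊥) {z w : X} {σ u r : ℝ}
    (hσ : σ < 0) (hsep : ∀ x (t : ℝ), f x ≤ t → ⟪x, z⟫ + t * σ < u)
    (hw : u < ⟪w, z⟫ + r * σ) :
    ∃ (v : X) (c : ℝ), (∀ x, f x ≠ ⊤ → ⟪x, v⟫ - c ≤ (f x).toReal) ∧ r < ⟪w, v⟫ - c := by
  refine ⟨(-σ)⁻¹ • z, u / -σ, fun x hx => ?_, ?_⟩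
  · have := hsep x _ (EReal.coe_toReal hx (hfbot x)).ge
    rw [real_inner_smul_right, ← div_eq_inv_mul, div_sub_div_same, div_le_iff₀ (by linarith)]
    linarith
  · rw [real_inner_smul_right, ← div_eq_inv_mul, div_sub_div_same, lt_div_iff₀ (by linarith)]
    linarith

variable [FiniteDimensional ℝ X]

theorem ContinuousLinearMap.exists_inner_add_mul_eq (ℓ : X × ℝ →L[ℝ] ℝ) :
    ∃ (z : X) (σ : ℝ), ∀ x t, ℓ (x, t) = ⟪x, z⟫ + t * σ := by
  refine ⟨(InnerProductSpace.toDual ℝ X).symm (ℓ.comp (ContinuousLinearMap.inl ℝ X ℝ)),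
    ℓ (0, 1), fun x t => ?_⟩
  have hxt : (x, t) = (x, (0 : ℝ)) + t • ((0 : X), (1 : ℝ)) := by simp
  rw [real_inner_comm, InnerProductSpace.toDual_symm_apply, hxt, map_add, map_smul,
    smul_eq_mul]
  rfl

theorem exists_separation_epigraph (hclosed : LowerSemicontinuous f) (hconv : ERealConvexOn f)
    {w : X} {r : ℝ} (hr : (r : EReal) < f w) :
    ∃ (z : X) (σ u : ℝ), (∀ x (t : ℝ), f x ≤ t → ⟪x, z⟫ + t * σ < u) ∧ u < ⟪w, z⟫ + r * σ := by
  obtain ⟨ℓ, u, hℓ, hu⟩ := geometric_hahn_banach_closed_point hconv.convex_epigraph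
    hclosed.isClosed_epigraph_coe (x := (w, r)) (not_le.2 hr)
  obtain ⟨z, σ, hzσ⟩ := ℓ.exists_inner_add_mul_eq
  exact ⟨z, σ, u, fun x t hxt => hzσ x t ▸ hℓ (x, t) hxt, hzσ w r ▸ hu⟩

/-- When the separating hyperplane is vertical, it is used to tilt an affine minorant obtained at a
point of the domain. -/
theorem exists_affine_minorant (hfbot : ∀ x, f x ≠ ⊥) (hproper : ∃ x, f x ≠ ⊤)
    (hclosed : LowerSemicontinuous f) (hconv : ERealConvexOn f) {w : X} {r : ℝ}
    (hr : (r : EReal) < f w) :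
    ∃ (v : X) (c : ℝ), (∀ x, f x ≠ ⊤ → ⟪x, v⟫ - c ≤ (f x).toReal) ∧ r < ⟪w, v⟫ - c := by
  obtain ⟨x₀, hx₀⟩ := hproper
  have hfx₀ := (EReal.coe_toReal hx₀ (hfbot x₀)).ge
  obtain ⟨z, σ, u, hsep, hw⟩ := exists_separation_epigraph hclosed hconv hr
  rcases lt_trichotomy σ 0 with hσ | rfl | hσ
  · exact exists_affine_minorant_of_separation hfbot hσ hsep hw
  · have hlt₀ : (((f x₀).toReal - 1 : ℝ) : EReal) < f x₀ := by
      rw [← EReal.coe_toReal hx₀ (hfbot x₀)]; exact_mod_cast sub_one_lt _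
    obtain ⟨z₀, σ₀, u₀, hsep₀, hx₀u⟩ := exists_separation_epigraph hclosed hconv hlt₀
    have hσ₀ : σ₀ < 0 := by linarith [hsep₀ x₀ _ hfx₀]
    obtain ⟨v₀, c₀, hmin₀, -⟩ := exists_affine_minorant_of_separation hfbot hσ₀ hsep₀ hx₀u
    have hgap : 0 < ⟪w, z⟫ - u := by linarith
    set k := (|r - ⟪w, v₀⟫ + c₀| + 1) / (⟪w, z⟫ - u)
    have hk : 0 ≤ k := by positivity
    have hkgap : k * (⟪w, z⟫ - u) = |r - ⟪w, v₀⟫ + c₀| + 1 := div_mul_cancel₀ _ hgap.ne'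
    refine ⟨v₀ + k • z, c₀ + k * u, fun x hx => ?_, ?_⟩
    · have hxz : ⟪x, z⟫ < u := by simpa using hsep x _ (EReal.coe_toReal hx (hfbot x)).ge
      rw [inner_add_right, real_inner_smul_right]
      nlinarith [hmin₀ x hx]
    · rw [inner_add_right, real_inner_smul_right]
      nlinarith [le_abs_self (r - ⟪w, v₀⟫ + c₀)]
  · exfalso
    set t := max (f x₀).toReal ((u - ⟪x₀, z⟫) / σ)
    have hsep_t := hsep x₀ t (hfx₀.trans (by exact_mod_cast le_max_left _ _))
    have : (u - ⟪x₀, z⟫) / σ ≤ t := le_max_right _ _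
    rw [div_le_iff₀ hσ] at this
    linarith

/-- The Fenchel–Moreau theorem, in the form `f ≤ f⋆⋆`. -/
theorem exists_lt_inner_sub_of_lt (hfbot : ∀ x, f x ≠ ⊥) (hproper : ∃ x, f x ≠ ⊤)
    (hclosed : LowerSemicontinuous f) (hconv : ERealConvexOn f) {g : X → ℝ}
    (hg : ∀ y, (g y : EReal) = fenchelConj f y) {w : X} {r : ℝ} (hr : (r : EReal) < f w) :
    ∃ v, r < ⟪w, v⟫ - g v := by
  obtain ⟨v, c, hmin, hw⟩ := exists_affine_minorant hfbot hproper hclosed hconv hr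
  have hgv : g v ≤ c := by
    have := fenchelConj_le_coe hfbot fun x hx => (by linarith [hmin x hx] : ⟪x, v⟫ - _ ≤ c)
    exact_mod_cast (hg v).trans_le this
  exact ⟨v, by linarith⟩

end ConvexConjugate

theorem LowerSemicontinuousAt.le_of_tendsto {α ι : Type*} [TopologicalSpace α] {f : α → EReal}
    {w : α} (hf : LowerSemicontinuousAt f w) {l : Filter ι} [l.NeBot] {γ : ι → α} {S : ι → ℝ}
    {L : ℝ} (hγ : Tendsto γ l (𝓝 w)) (hS : Tendsto S l (𝓝 L))
    (hle : ∀ᶠ i in l, f (γ i) ≤ S i) : f w ≤ L := by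
  by_contra! hL
  obtain ⟨r, hLr, hrw⟩ := EReal.exists_between_coe_real hL
  obtain ⟨i, hfi, hSi, hi⟩ := ((hγ.eventually (hf r hrw)).and
    ((hS.eventually (gt_mem_nhds (by exact_mod_cast hLr))).and hle)).exists
  exact (hfi.trans_le hi).not_ge (by exact_mod_cast hSi.le)

theorem EReal.toReal_le_of_le_coe {a : EReal} {r : ℝ} (ha : a ≠ ⊥) (h : a ≤ r) : a.toReal ≤ r := by
  simpa using EReal.toReal_le_toReal h ha (EReal.coe_ne_top r)

section IntrinsicInterior

variable {X : Type*} [NormedAddCommGroup X] [InnerProductSpace ℝ X]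

theorem mem_intrinsicInterior_iff_exists_ball {s : Set X} {x : X} :
    x ∈ intrinsicInterior ℝ s ↔
      x ∈ s ∧ ∃ ε > 0, ∀ z ∈ affineSpan ℝ s, dist z x < ε → z ∈ s := by
  constructor
  · rintro ⟨y, hy, rfl⟩
    obtain ⟨ε, hε, hball⟩ := Metric.mem_nhds_iff.1 (mem_interior_iff_mem_nhds.1 hy)
    exact ⟨Set.mem_preimage.1 (interior_subset hy), ε, hε,
      fun z hz hzx => hball (show dist ⟨z, hz⟩ y < ε from hzx)⟩
  · rintro ⟨hxs, ε, hε, hball⟩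
    refine ⟨⟨x, subset_affineSpan ℝ s hxs⟩, ?_, rfl⟩
    rw [mem_interior_iff_mem_nhds, Metric.mem_nhds_iff]
    exact ⟨ε, hε, fun z hz => hball z z.2 hz⟩

theorem Convex.combo_intrinsicInterior_self_mem {s : Set X} (hs : Convex ℝ s) {x y : X}
    (hx : x ∈ intrinsicInterior ℝ s) (hy : y ∈ s) {t : ℝ} (ht0 : 0 < t) (ht1 : t ≤ 1) :
    t • x + (1 - t) • y ∈ intrinsicInterior ℝ s := by
  rw [mem_intrinsicInterior_iff_exists_ball] at hx ⊢
  obtain ⟨hxs, ε, hε, hball⟩ := hx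
  set w := t • x + (1 - t) • y
  have hws : w ∈ s := hs hxs hy ht0.le (by linarith) (by ring)
  refine ⟨hws, t * ε, by positivity, fun z hz hzw => ?_⟩
  -- `z` is the image of `u` under the homothety of ratio `t` centred at `y`
  set u := t⁻¹ • (z - w) + x
  have hu : u ∈ affineSpan ℝ s := by
    refine AffineSubspace.vadd_mem_of_mem_direction (Submodule.smul_mem _ _ ?_)
      (subset_affineSpan ℝ s hxs)
    simpa using AffineSubspace.vsub_mem_direction hz (subset_affineSpan ℝ s hws)
  have hux : dist u x < ε := by
    rw [dist_eq_norm, add_sub_cancel_right, norm_smul, Real.norm_eq_abs,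
      abs_of_pos (inv_pos.2 ht0), ← dist_eq_norm, inv_mul_lt_iff₀ ht0]
    exact hzw
  have hz : z = t • u + (1 - t) • y := by
    simp only [u, w, smul_add, smul_smul, mul_inv_cancel₀ ht0.ne', one_smul]
    abel
  exact hz ▸ hs (hball u hu hux) hy ht0.le (by linarith) (by ring)

end IntrinsicInterior

theorem coe_mul_add_coe_mul_sub_coe {ι : Type*} {f : ι → EReal} (hfbot : ∀ x, f x ≠ ⊥) {x y : ι}
    (hx : f x ≠ ⊤) (hy : f y ≠ ⊤) (α c : ℝ) :
    (α : EReal) * f x + ((1 - α : ℝ) : EReal) * f y - (c : EReal) =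
      ((α * (f x).toReal + (1 - α) * (f y).toReal - c : ℝ) : EReal) := by
  rw [← EReal.coe_toReal hx (hfbot x), ← EReal.coe_toReal hy (hfbot y)]
  norm_cast

theorem exists_lt_mul_sq_sub_mul {a : ℝ} (ha : 0 < a) (b M : ℝ) :
    ∃ R, ∀ d, R < d → M < a * d ^ 2 - b * d := by
  refine ⟨(|b| + |M|) / a + 1, fun d hd => ?_⟩
  have hd1 : 1 < d := by linarith [show 0 ≤ (|b| + |M|) / a by positivity]
  have had : |b| + |M| + a < a * d := by
    rw [div_add_one ha.ne', div_lt_iff₀ ha] at hd; linarith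
  calc M < |M| + a := by linarith [le_abs_self M]
    _ ≤ d * (|M| + a) := le_mul_of_one_le_left (by positivity) hd1.le
    _ ≤ d * (a * d - |b|) := by gcongr; linarith
    _ ≤ a * d ^ 2 - b * d := by nlinarith [le_abs_self b]

theorem mul_le_mul_sq_add_inv_mul_sq {β : ℝ} (hβ : 0 < β) (a b : ℝ) :
    a * b ≤ β / 2 * a ^ 2 + 1 / β / 2 * b ^ 2 := by
  have key : β / 2 * a ^ 2 + 1 / β / 2 * b ^ 2 - a * b = (β * a - b) ^ 2 / (2 * β) := by
    field_simp; ring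
  linarith [show 0 ≤ (β * a - b) ^ 2 / (2 * β) by positivity]

section Forward

variable {X : Type*} [NormedAddCommGroup X] [InnerProductSpace ℝ X] [FiniteDimensional ℝ X]
  {N : X → ℝ} {β : ℝ} {f : X → EReal}

/-- Move `x` and `y` towards a point `z` of the relative interior of the domain and use lower
semicontinuity at the limit. -/
theorem EStrongConvexOn.le_coe_of_ne_top (hN : IsNormOn N) (hfbot : ∀ x, f x ≠ ⊥)
    (hclosed : LowerSemicontinuous f) (hconv : ERealConvexOn f) (hsc : EStrongConvexOn N β f)
    {x y : X} (hx : f x ≠ ⊤) (hy : f y ≠ ⊤) {α : ℝ} (hα0 : 0 < α) (hα1 : α < 1) :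
    f (α • x + (1 - α) • y) ≤
      ((α * (f x).toReal + (1 - α) * (f y).toReal - β / 2 * α * (1 - α) * N (x - y) ^ 2 : ℝ) :
        EReal) := by
  set D := {z : X | f z ≠ ⊤}
  have hD : Convex ℝ D := hconv.convex_dom hfbot
  obtain ⟨z, hz⟩ := Set.Nonempty.intrinsicInterior hD ⟨x, hx⟩
  have hzD : f z ≠ ⊤ := intrinsicInterior_subset hz
  set A := α * (f x).toReal + (1 - α) * (f y).toReal
  set c := β / 2 * α * (1 - α) * N (x - y) ^ 2
  set w := α • x + (1 - α) • y
  have htoward_z : ∀ t : ℝ, 0 < t → t < 1 → ∀ p, f p ≠ ⊤ →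
      t • z + (1 - t) • p ∈ intrinsicInterior ℝ D ∧
        (f (t • z + (1 - t) • p)).toReal ≤ t * (f z).toReal + (1 - t) * (f p).toReal :=
    fun t ht0 ht1 p hp => ⟨hD.combo_intrinsicInterior_self_mem hz hp ht0 ht1.le,
      EReal.toReal_le_of_le_coe (hfbot _) (hconv.le_coe_of_le (EReal.coe_toReal hzD (hfbot z)).ge
        (EReal.coe_toReal hp (hfbot p)).ge ht0.le ht1.le)⟩
  refine LowerSemicontinuousAt.le_of_tendsto (hclosed w) (l := 𝓝[>] 0)
    (γ := fun t : ℝ => t • z + (1 - t) • w)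
    (S := fun t => t * (f z).toReal + (1 - t) * A - (1 - t) ^ 2 * c) ?_ ?_ ?_
  · exact (Continuous.tendsto' (by fun_prop) 0 w (by simp)).mono_left nhdsWithin_le_nhds
  · exact (Continuous.tendsto' (by fun_prop) 0 (A - c) (by simp)).mono_left nhdsWithin_le_nhds
  filter_upwards [Ioo_mem_nhdsGT one_pos] with t ⟨ht0, ht1⟩
  obtain ⟨hxt, hxt_le⟩ := htoward_z t ht0 ht1 x hx
  obtain ⟨hyt, hyt_le⟩ := htoward_z t ht0 ht1 y hy
  have hcombo : α • (t • z + (1 - t) • x) + (1 - α) • (t • z + (1 - t) • y) =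
      t • z + (1 - t) • w := by module
  have hN_t : N ((t • z + (1 - t) • x) - (t • z + (1 - t) • y)) = (1 - t) * N (x - y) := by
    rw [show (t • z + (1 - t) • x) - (t • z + (1 - t) • y) = (1 - t) • (x - y) by module,
      hN.2.2.1, abs_of_pos (by linarith)]
  have h := hsc _ hxt _ hyt α hα0 hα1
  rw [hcombo, coe_mul_add_coe_mul_sub_coe hfbot (intrinsicInterior_subset hxt)
    (intrinsicInterior_subset hyt), hN_t] at h
  refine h.trans (EReal.coe_le_coe_iff.2 ?_)
  linear_combination α * hxt_le + (1 - α) * hyt_le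

theorem EStrongConvexOn.exists_quadratic_minorant (hN : IsNormOn N) (hfbot : ∀ x, f x ≠ ⊥)
    (hproper : ∃ x, f x ≠ ⊤) (hclosed : LowerSemicontinuous f) (hconv : ERealConvexOn f)
    (hsc : EStrongConvexOn N β f) :
    ∃ (x₀ v : X) (c : ℝ), f x₀ ≠ ⊤ ∧
      ∀ x, f x ≠ ⊤ → ⟪x, v⟫ - c + β / 4 * N (x - x₀) ^ 2 ≤ (f x).toReal := by
  obtain ⟨x₀, hx₀⟩ := hproper
  obtain ⟨r, -, hr⟩ := EReal.exists_between_coe_real (bot_lt_iff_ne_bot.2 (hfbot x₀))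
  obtain ⟨v, c, hmin, -⟩ := exists_affine_minorant hfbot ⟨x₀, hx₀⟩ hclosed hconv hr
  refine ⟨x₀, v, 2 * c + (f x₀).toReal - ⟪x₀, v⟫, hx₀, fun x hx => ?_⟩
  have hmid := hsc.le_coe_of_ne_top hN hfbot hclosed hconv hx hx₀ (α := 1 / 2) (by norm_num)
    (by norm_num)
  have h1 := EReal.toReal_le_of_le_coe (hfbot _) hmid
  have h2 := hmin _ (ne_top_of_le_ne_top (EReal.coe_ne_top _) hmid)
  rw [inner_add_left, real_inner_smul_left, real_inner_smul_left] at h2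
  linarith

theorem EStrongConvexOn.exists_forall_inner_sub_le (hN : IsNormOn N) (hβ : 0 < β)
    (hfbot : ∀ x, f x ≠ ⊥) (hproper : ∃ x, f x ≠ ⊤) (hclosed : LowerSemicontinuous f)
    (hconv : ERealConvexOn f) (hsc : EStrongConvexOn N β f) (y : X) :
    ∃ x, f x ≠ ⊤ ∧ ∀ x', f x' ≠ ⊤ → ⟪x', y⟫ - (f x').toReal ≤ ⟪x, y⟫ - (f x).toReal := by
  obtain ⟨x₀, v, c, hx₀, hq⟩ := hsc.exists_quadratic_minorant hN hfbot hproper hclosed hconv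
  obtain ⟨m, hm, hmN⟩ := hN.exists_pos_mul_norm_le
  set ψ : X → EReal := fun x => f x + ((-⟪x, y⟫ : ℝ) : EReal)
  have hψ : LowerSemicontinuous ψ := hclosed.add'
    (continuous_coe_real_ereal.comp (continuous_id.inner continuous_const).neg).lowerSemicontinuous
    fun x => EReal.continuousAt_add (Or.inr (by simp)) (Or.inl (hfbot x))
  have hψD : ∀ x, f x ≠ ⊤ → ψ x = ((f x).toReal - ⟪x, y⟫ : ℝ) := fun x hx => by
    simp only [ψ, sub_eq_add_neg, EReal.coe_add, EReal.coe_toReal hx (hfbot x)]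
  obtain ⟨R, hR⟩ := exists_lt_mul_sq_sub_mul (a := β / 4 * m ^ 2) (by positivity) ‖v - y‖
    ((f x₀).toReal - ⟪x₀, y⟫ - ⟪x₀, v - y⟫ + c)
  have hfar : ∀ x, f x ≠ ⊤ → R < ‖x - x₀‖ →
      (f x₀).toReal - ⟪x₀, y⟫ < (f x).toReal - ⟪x, y⟫ := by
    intro x hx hxR
    have hNx : (m * ‖x - x₀‖) ^ 2 ≤ N (x - x₀) ^ 2 :=
      pow_le_pow_left₀ (by positivity) (hmN _) 2
    have hinner : ⟪x, v⟫ - ⟪x, y⟫ = ⟪x₀, v - y⟫ + ⟪x - x₀, v - y⟫ := by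
      simp only [inner_sub_left, inner_sub_right]; ring
    nlinarith [hR _ hxR, hq x hx, neg_le_of_abs_le (abs_real_inner_le_norm (x - x₀) (v - y))]
  have hx₀K : x₀ ∈ Metric.closedBall x₀ (max R 0) := Metric.mem_closedBall_self (le_max_right _ _)
  obtain ⟨xs, -, hxs⟩ := LowerSemicontinuousOn.exists_isMinOn ⟨x₀, hx₀K⟩
    (isCompact_closedBall x₀ (max R 0)) (hψ.lowerSemicontinuousOn _)
  have hxs₀ : ψ xs ≤ ψ x₀ := hxs hx₀K
  have hxsD : f xs ≠ ⊤ := fun h => by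
    rw [hψD x₀ hx₀, show ψ xs = ⊤ by simp [ψ, h], top_le_iff] at hxs₀
    exact EReal.coe_ne_top _ hxs₀
  refine ⟨xs, hxsD, fun x' hx' => ?_⟩
  suffices ψ xs ≤ ψ x' by
    rw [hψD xs hxsD, hψD x' hx', EReal.coe_le_coe_iff] at this
    linarith
  by_cases hx'K : x' ∈ Metric.closedBall x₀ (max R 0)
  · exact hxs hx'K
  · rw [Metric.mem_closedBall, not_le, dist_eq_norm, max_lt_iff] at hx'K
    refine hxs₀.trans ?_
    rw [hψD x₀ hx₀, hψD x' hx', EReal.coe_le_coe_iff]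
    exact (hfar x' hx' hx'K.1).le

theorem EStrongConvexOn.quadratic_growth_of_forall_inner_sub_le (hN : IsNormOn N)
    (hfbot : ∀ x, f x ≠ ⊥) (hclosed : LowerSemicontinuous f) (hconv : ERealConvexOn f)
    (hsc : EStrongConvexOn N β f) {x y : X} (hx : f x ≠ ⊤)
    (hmax : ∀ x', f x' ≠ ⊤ → ⟪x', y⟫ - (f x').toReal ≤ ⟪x, y⟫ - (f x).toReal)
    {x' : X} (hx' : f x' ≠ ⊤) :
    (f x).toReal + ⟪x' - x, y⟫ + β / 2 * N (x' - x) ^ 2 ≤ (f x').toReal := by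
  set Q := N (x' - x) ^ 2
  have hα : ∀ α ∈ Set.Ioo (0 : ℝ) 1,
      β / 2 * (1 - α) * Q ≤ (f x').toReal - (f x).toReal - ⟪x' - x, y⟫ := by
    rintro α ⟨hα0, hα1⟩
    have hp := hsc.le_coe_of_ne_top hN hfbot hclosed hconv hx' hx hα0 hα1
    have h1 := EReal.toReal_le_of_le_coe (hfbot _) hp
    have h2 := hmax _ (ne_top_of_le_ne_top (EReal.coe_ne_top _) hp)
    have hinner : ⟪α • x' + (1 - α) • x, y⟫ = ⟪x, y⟫ + α * ⟪x' - x, y⟫ := by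
      rw [inner_add_left, real_inner_smul_left, real_inner_smul_left, inner_sub_left]; ring
    rw [hinner] at h2
    refine le_of_mul_le_mul_left ?_ hα0
    linarith
  have hlim : Tendsto (fun α : ℝ => β / 2 * (1 - α) * Q) (𝓝[>] 0) (𝓝 (β / 2 * Q)) :=
    (Continuous.tendsto' (by fun_prop) 0 _ (by simp)).mono_left nhdsWithin_le_nhds
  linarith [le_of_tendsto hlim (eventually_of_mem (Ioo_mem_nhdsGT one_pos) hα)]

end Forward

theorem hasGradientAt_of_abs_sub_inner_le {X : Type*} [NormedAddCommGroup X]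
    [InnerProductSpace ℝ X] [CompleteSpace X] {g : X → ℝ} {x y : X} {C : ℝ}
    (h : ∀ d, |g (y + d) - g y - ⟪x, d⟫| ≤ C * ‖d‖ ^ 2) : HasGradientAt g x y := by
  rw [hasGradientAt_iff_isLittleO_nhds_zero]
  refine (Asymptotics.IsBigO.of_bound C (.of_forall fun d => ?_)).trans_isLittleO
    (Asymptotics.isLittleO_norm_pow_id one_lt_two)
  simpa using h d

section Duality

variable {X : Type*} [NormedAddCommGroup X] [InnerProductSpace ℝ X] [FiniteDimensional ℝ X]
  {N : X → ℝ} {β : ℝ} {f : X → EReal}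

theorem EStrongConvexOn.exists_stronglySmoothOn_fenchelConj (hN : IsNormOn N) (hβ : 0 < β)
    (hfbot : ∀ x, f x ≠ ⊥) (hproper : ∃ x, f x ≠ ⊤) (hclosed : LowerSemicontinuous f)
    (hconv : ERealConvexOn f) (hsc : EStrongConvexOn N β f) :
    ∃ g : X → ℝ, (∀ y, (g y : EReal) = fenchelConj f y) ∧
      StronglySmoothOn (dualNorm N) (1 / β) g := by
  choose xm hxmD hxm using hsc.exists_forall_inner_sub_le hN hβ hfbot hproper hclosed hconv
  set g : X → ℝ := fun y => ⟪xm y, y⟫ - (f (xm y)).toReal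
  have hg : ∀ y, (g y : EReal) = fenchelConj f y := fun y =>
    le_antisymm (coe_inner_sub_le_fenchelConj hfbot (hxmD y) y) (fenchelConj_le_coe hfbot (hxm y))
  have hlow : ∀ y d, g y + ⟪xm y, d⟫ ≤ g (y + d) := fun y d => by
    have := hxm (y + d) (xm y) (hxmD y)
    simp only [g, inner_add_right] at this ⊢
    linarith
  have hup : ∀ y d, g (y + d) ≤ g y + ⟪xm y, d⟫ + 1 / β / 2 * dualNorm N d ^ 2 := fun y d => by
    have hq := hsc.quadratic_growth_of_forall_inner_sub_le hN hfbot hclosed hconv (hxmD y) (hxm y)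
      (hxmD (y + d))
    have hpair := inner_le_mul_dualNorm hN (xm (y + d) - xm y) d
    have hyoung := mul_le_mul_sq_add_inv_mul_sq hβ (N (xm (y + d) - xm y)) (dualNorm N d)
    simp only [g, inner_add_right, inner_sub_left] at hq hpair ⊢
    linarith
  obtain ⟨K, hK⟩ := exists_dualNorm_le_mul_norm hN
  have hgrad : ∀ y, HasGradientAt g (xm y) y := fun y =>
    hasGradientAt_of_abs_sub_inner_le (C := 1 / β / 2 * K ^ 2) fun d => by
      have hd : dualNorm N d ^ 2 ≤ K ^ 2 * ‖d‖ ^ 2 := by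
        rw [← mul_pow]; exact pow_le_pow_left₀ (dualNorm_nonneg hN d) (hK d) 2
      have hβd : 1 / β / 2 * dualNorm N d ^ 2 ≤ 1 / β / 2 * (K ^ 2 * ‖d‖ ^ 2) := by gcongr
      rw [abs_le]
      constructor <;> linarith [hlow y d, hup y d]
  refine ⟨g, hg, fun y => (hgrad y).differentiableAt, fun y d => ?_⟩
  rw [(hgrad y).gradient]
  exact hup y d

theorem StronglySmoothOn.inner_sub_le_toReal {L : ℝ} {g : X → ℝ}
    (hsm : StronglySmoothOn (dualNorm N) L g) (hfbot : ∀ x, f x ≠ ⊥)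
    (hg : ∀ y, (g y : EReal) = fenchelConj f y) {x : X} (hx : f x ≠ ⊤) (v z : X) :
    ⟪x, v + z⟫ - g v - ⟪gradient g v, z⟫ - L / 2 * dualNorm N z ^ 2 ≤ (f x).toReal := by
  have hfy : ⟪x, v + z⟫ - (f x).toReal ≤ g (v + z) := by
    exact_mod_cast (coe_inner_sub_le_fenchelConj hfbot hx (v + z)).trans_eq (hg _).symm
  linarith [hsm.2 v z]

theorem EStrongConvexOn.of_stronglySmoothOn_fenchelConj (hN : IsNormOn N) (hβ : 0 < β)
    (hfbot : ∀ x, f x ≠ ⊥) (hproper : ∃ x, f x ≠ ⊤) (hclosed : LowerSemicontinuous f)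
    (hconv : ERealConvexOn f) {g : X → ℝ} (hg : ∀ y, (g y : EReal) = fenchelConj f y)
    (hsm : StronglySmoothOn (dualNorm N) (1 / β) g) : EStrongConvexOn N β f := by
  intro x hxD y hyD α hα0 hα1
  have hx : f x ≠ ⊤ := intrinsicInterior_subset hxD
  have hy : f y ≠ ⊤ := intrinsicInterior_subset hyD
  obtain ⟨z₀, hz₀, hz₀xy⟩ := exists_dualNorm_le_one_inner_eq hN (x - y)
  set n := N (x - y)
  rw [inner_sub_left] at hz₀xy
  have hsq : ∀ c : ℝ, dualNorm N (c • z₀) ^ 2 ≤ c ^ 2 := fun c =>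
    calc dualNorm N (c • z₀) ^ 2 ≤ |c| ^ 2 := pow_le_pow_left₀ (dualNorm_nonneg hN _)
          ((dualNorm_smul_le hN c z₀).trans (mul_le_of_le_one_right (abs_nonneg c) hz₀)) 2
      _ = c ^ 2 := sq_abs c
  have hβinv : 1 / β * β = 1 := one_div_mul_cancel hβ.ne'
  have hbound : ∀ v, ⟪α • x + (1 - α) • y, v⟫ - g v ≤
      α * (f x).toReal + (1 - α) * (f y).toReal - β / 2 * α * (1 - α) * n ^ 2 := by
    intro v
    -- directions `(1 - α) s` and `-α s` with `s = β N(x - y) z₀`, so the gradient terms cancel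
    have hA := hsm.inner_sub_le_toReal hfbot hg hx v (((1 - α) * β * n) • z₀)
    have hB := hsm.inner_sub_le_toReal hfbot hg hy v ((-(α * β * n)) • z₀)
    simp only [inner_add_right, inner_add_left, real_inner_smul_right, real_inner_smul_left]
      at hA hB ⊢
    linear_combination α * hA + (1 - α) * hB
      + 1 / β / 2 * (α * hsq ((1 - α) * β * n) + (1 - α) * hsq (-(α * β * n)))
      - α * (1 - α) * β * n * hz₀xy + α * (1 - α) * β * n ^ 2 / 2 * hβinv
  rw [coe_mul_add_coe_mul_sub_coe hfbot hx hy]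
  by_contra! hlt
  obtain ⟨v, hv⟩ := exists_lt_inner_sub_of_lt hfbot hproper hclosed hconv hg hlt
  linarith [hbound v]

end Duality

/-- Strong convexity / strong smoothness duality: a closed (lower semicontinuous), convex,
proper function `f : X → ℝ ∪ {∞}` on a Euclidean space is `β`-strongly convex w.r.t. a norm
`N` iff its Fenchel conjugate `f⋆` is (finite-valued and) `1/β`-strongly smooth w.r.t. the
dual norm of `N`. -/
theorem stmt0 [FiniteDimensional ℝ X]
    (N : X → ℝ) (hN : IsNormOn N) (β : ℝ) (hβ : 0 < β)
    (f : X → EReal) (hfbot : ∀ x, f x ≠ ⊥) (hproper : ∃ x, f x ≠ ⊤)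
    (hclosed : LowerSemicontinuous f) (hconv : ERealConvexOn f) :
    EStrongConvexOn N β f ↔
      ∃ g : X → ℝ, (∀ y, (g y : EReal) = fenchelConj f y) ∧
        StronglySmoothOn (dualNorm N) (1 / β) g :=
  ⟨fun hsc => hsc.exists_stronglySmoothOn_fenchelConj hN hβ hfbot hproper hclosed hconv,
    fun ⟨_, hg, hsm⟩ =>
      .of_stronglySmoothOn_fenchelConj hN hβ hfbot hproper hclosed hconv hg hsm⟩
end

section
/- Let q ∈ [1,2] and d ≥ 1. The function f : ℝ^d → ℝ defined by f(w) = (1/2)‖w‖_q² is (q−1)-strongly convex with respect to the norm ‖·‖_q on ℝ^d; that is, for all w, u ∈ ℝ^d and α ∈ (0,1), f(αw + (1−α)u) ≤ αf(w) + (1−α)f(u) − ((q−1)/2)α(1−α)‖w−u‖_q². -/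
open scoped BigOperators

/-- The vector `q`-norm on `ℝ^d`: `‖w‖_q = (∑ i, |w i| ^ q) ^ (1/q)`. -/
noncomputable def pnorm {d : ℕ} (q : ℝ) (w : Fin d → ℝ) : ℝ :=
  (∑ i, |w i| ^ q) ^ (1 / q)

/-!
The two-point inequality `(a² + (q - 1) b²) ^ (q / 2) ≤ (|a + b| ^ q + |a - b| ^ q) / 2`
(Ball–Carlen–Lieb) holds for reals since both sides agree at `b = 0` and the right side grows
faster in `b`. Applied coordinatewise, and combined with Minkowski's inequality in `ℓ^(2/q)` and
convexity of `t ↦ t ^ (2 / q)`, it gives `‖a‖² + (q - 1) ‖b‖² ≤ (‖a + b‖² + ‖a - b‖²) / 2`.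
This says that `t ↦ ‖u + t v‖² - (q - 1) ‖v‖² t²` is midpoint convex; being continuous, it is
convex, and comparing its values at `0`, `α` and `1` is the claim.
-/

open Real Set Finset

lemma rpow_div_two_sq {x : ℝ} (hx : 0 ≤ x) (r : ℝ) : (x ^ (r / 2)) ^ 2 = x ^ r := by
  rw [← rpow_mul_natCast hx]; norm_num

lemma sq_rpow_div_two {x : ℝ} (hx : 0 ≤ x) (r : ℝ) : (x ^ 2) ^ (r / 2) = x ^ r := by
  rw [← rpow_natCast_mul hx]; congr 1; push_cast; ring

lemma two_mul_rpow_le_rpow_add_add_rpow_sub {r a x : ℝ} (hr : r ≤ 0) (h₁ : 0 < a + x)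
    (h₂ : 0 < a - x) : 2 * a ^ r ≤ (a + x) ^ r + (a - x) ^ r := by
  have ha : 0 ≤ a := by linarith
  calc 2 * a ^ r = 2 * (a ^ 2) ^ (r / 2) := by rw [sq_rpow_div_two ha]
    _ ≤ 2 * ((a + x) * (a - x)) ^ (r / 2) := by
        gcongr 2 * ?_
        exact rpow_le_rpow_of_nonpos (by positivity) (by nlinarith [sq_nonneg x]) (by linarith)
    _ = 2 * ((a + x) ^ (r / 2) * (a - x) ^ (r / 2)) := by rw [mul_rpow h₁.le h₂.le]
    _ ≤ ((a + x) ^ (r / 2)) ^ 2 + ((a - x) ^ (r / 2)) ^ 2 := by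
        rw [← mul_assoc]; exact two_mul_le_add_sq _ _
    _ = (a + x) ^ r + (a - x) ^ r := by rw [rpow_div_two_sq h₁.le, rpow_div_two_sq h₂.le]

lemma two_mul_mul_rpow_le_rpow_add_sub_rpow_sub {s a b : ℝ} (hs₀ : 0 ≤ s) (hs₁ : s ≤ 1)
    (hb : 0 ≤ b) (hba : b < a) :
    2 * s * b * a ^ (s - 1) ≤ (a + b) ^ s - (a - b) ^ s := by
  let φ : ℝ → ℝ := fun x => (a + x) ^ s - (a - x) ^ s - 2 * s * x * a ^ (s - 1)
  have hφ : MonotoneOn φ (Icc 0 b) := by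
    refine monotoneOn_of_hasDerivWithinAt_nonneg (convex_Icc 0 b)
      (by fun_prop (disch := assumption))
      (f' := fun x => s * ((a + x) ^ (s - 1) + (a - x) ^ (s - 1) - 2 * a ^ (s - 1))) ?_ ?_
    all_goals
      intro x hx
      rw [interior_Icc] at hx
      have h₁ : 0 < a + x := by linarith [hx.1]
      have h₂ : 0 < a - x := by linarith [hx.2]
    · refine HasDerivAt.hasDerivWithinAt ?_
      have := ((((hasDerivAt_id' x).const_add a).rpow_const (p := s) (Or.inl h₁.ne')).sub
        (((hasDerivAt_id' x).const_sub a).rpow_const (p := s) (Or.inl h₂.ne'))).sub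
        (((hasDerivAt_id' x).const_mul (2 * s)).mul_const (a ^ (s - 1)))
      exact this.congr_deriv (by ring)
    · exact mul_nonneg hs₀ (by
        linarith [two_mul_rpow_le_rpow_add_add_rpow_sub (by linarith : s - 1 ≤ 0) h₁ h₂])
  have := hφ ⟨le_rfl, hb⟩ ⟨hb, le_rfl⟩ hb
  simp only [φ, add_zero, sub_zero, mul_zero, zero_mul, sub_self] at this
  linarith

lemma rpow_sq_add_mul_sq_le_of_le {q a b : ℝ} (hq₁ : 1 ≤ q) (hq₂ : q ≤ 2) (hb : 0 ≤ b)
    (hba : b ≤ a) :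
    (a ^ 2 + (q - 1) * b ^ 2) ^ (q / 2) ≤ ((a + b) ^ q + (a - b) ^ q) / 2 := by
  let g : ℝ → ℝ := fun x => ((a + x) ^ q + (a - x) ^ q) / 2 - (a ^ 2 + (q - 1) * x ^ 2) ^ (q / 2)
  have hg : MonotoneOn g (Icc 0 b) := by
    refine monotoneOn_of_hasDerivWithinAt_nonneg (convex_Icc 0 b)
      (by fun_prop (disch := positivity))
      (f' := fun x => q / 2 * ((a + x) ^ (q - 1) - (a - x) ^ (q - 1))
        - q * (q - 1) * x * (a ^ 2 + (q - 1) * x ^ 2) ^ (q / 2 - 1)) ?_ ?_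
    all_goals
      intro x hx
      rw [interior_Icc] at hx
      have h₁ : 0 < a + x := by linarith [hx.1, hx.2]
      have h₂ : 0 < a - x := by linarith [hx.2]
      have hB : 0 < a ^ 2 + (q - 1) * x ^ 2 := by nlinarith
    · refine HasDerivAt.hasDerivWithinAt ?_
      have := (((((hasDerivAt_id' x).const_add a).rpow_const (p := q) (Or.inl h₁.ne')).add
        (((hasDerivAt_id' x).const_sub a).rpow_const (p := q) (Or.inl h₂.ne'))).div_const 2).sub
        ((((hasDerivAt_pow 2 x).const_mul (q - 1)).const_add (a ^ 2)).rpow_const (p := q / 2)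
          (Or.inl hB.ne'))
      exact this.congr_deriv (by push_cast; ring)
    · have ha : 0 < a := by linarith [hx.1]
      have hdiff := two_mul_mul_rpow_le_rpow_add_sub_rpow_sub (s := q - 1) (a := a) (by linarith)
        (by linarith) hx.1.le (by linarith [hx.2])
      have hpow : (a ^ 2 + (q - 1) * x ^ 2) ^ (q / 2 - 1) ≤ a ^ (q - 1 - 1) := by
        rw [← sq_rpow_div_two ha.le, show q / 2 - 1 = (q - 1 - 1) / 2 by ring]
        exact rpow_le_rpow_of_nonpos (by positivity) (by nlinarith [hx.1]) (by linarith)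
      have hqx : 0 ≤ q * (q - 1) * x :=
        mul_nonneg (mul_nonneg (by linarith) (by linarith)) hx.1.le
      nlinarith [mul_le_mul_of_nonneg_left hpow hqx]
  have := hg ⟨le_rfl, hb⟩ ⟨hb, le_rfl⟩ hb
  have ha : 0 ≤ a := hb.trans hba
  simp only [g, add_zero, sub_zero, ne_eq, OfNat.ofNat_ne_zero, not_false_eq_true, zero_pow,
    mul_zero, sq_rpow_div_two ha, add_self_div_two, sub_self] at this
  linarith

lemma rpow_sq_add_mul_sq_le {q : ℝ} (hq₁ : 1 ≤ q) (hq₂ : q ≤ 2) (a b : ℝ) :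
    (a ^ 2 + (q - 1) * b ^ 2) ^ (q / 2) ≤ (|a + b| ^ q + |a - b| ^ q) / 2 := by
  wlog ha : 0 ≤ a generalizing a
  · have h₁ : |-a + b| = |a - b| := by rw [← abs_neg]; ring_nf
    have h₂ : |-a - b| = |a + b| := by rw [← abs_neg]; ring_nf
    have := this (-a) (by linarith)
    rwa [neg_sq, h₁, h₂, add_comm (|a - b| ^ q)] at this
  wlog hb : 0 ≤ b generalizing b
  · have := this (-b) (by linarith)
    rwa [neg_sq, ← sub_eq_add_neg, sub_neg_eq_add, add_comm (|a - b| ^ q)] at this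
  wlog hba : b ≤ a generalizing a b
  · calc (a ^ 2 + (q - 1) * b ^ 2) ^ (q / 2) ≤ (b ^ 2 + (q - 1) * a ^ 2) ^ (q / 2) := by
          gcongr ?_ ^ _
          have hab : a ^ 2 ≤ b ^ 2 := pow_le_pow_left₀ ha (le_of_not_ge hba) 2
          nlinarith [mul_nonneg (sub_nonneg.2 hq₂) (sub_nonneg.2 hab)]
      _ ≤ (|b + a| ^ q + |b - a| ^ q) / 2 := this b hb a ha (by linarith)
      _ = (|a + b| ^ q + |a - b| ^ q) / 2 := by rw [add_comm b, abs_sub_comm]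
  rw [abs_of_nonneg (by linarith), abs_of_nonneg (by linarith)]
  exact rpow_sq_add_mul_sq_le_of_le hq₁ hq₂ hb hba

lemma nonpos_of_midpoint_le {g : ℝ → ℝ} (hg : Continuous g) (h₀ : g 0 = 0) (h₁ : g 1 = 0)
    (hmid : ∀ s t, g ((s + t) / 2) ≤ (g s + g t) / 2) {t : ℝ} (ht : t ∈ Icc (0 : ℝ) 1) :
    g t ≤ 0 := by
  obtain ⟨t₀, ht₀, hmax⟩ :=
    isCompact_Icc.exists_isMaxOn (nonempty_Icc.2 zero_le_one) hg.continuousOn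
  by_contra! hpos
  have hM : 0 < g t₀ := hpos.trans_le (hmax ht)
  -- the leftmost maximiser `t₁` is interior, and midpoint convexity around it gives a smaller one
  obtain ⟨t₁, ⟨ht₁, hgt₁⟩, hleast⟩ := (isCompact_Icc.inter_right
    (isClosed_singleton.preimage hg)).exists_isLeast ⟨t₀, ht₀, rfl⟩
  have hpos₁ : 0 < t₁ := ht₁.1.lt_of_ne (by rintro rfl; simp_all)
  have hlt₁ : t₁ < 1 := ht₁.2.lt_of_ne (by rintro rfl; simp_all)
  set ε := min t₁ (1 - t₁)
  have hε : 0 < ε := lt_min hpos₁ (by linarith)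
  have hl : t₁ - ε ∈ Icc (0 : ℝ) 1 := ⟨by linarith [min_le_left t₁ (1 - t₁)], by linarith⟩
  have hr : t₁ + ε ∈ Icc (0 : ℝ) 1 := ⟨by linarith, by linarith [min_le_right t₁ (1 - t₁)]⟩
  have hgt₁ : g t₁ = g t₀ := hgt₁
  have h := hmid (t₁ - ε) (t₁ + ε)
  rw [show (t₁ - ε + (t₁ + ε)) / 2 = t₁ by ring] at h
  have : t₁ ≤ t₁ - ε := hleast ⟨hl, le_antisymm (hmax hl) (by linarith [isMaxOn_iff.1 hmax _ hr])⟩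
  linarith

lemma convexOn_univ_of_continuous_of_midpoint_le {g : ℝ → ℝ} (hg : Continuous g)
    (hmid : ∀ s t, g ((s + t) / 2) ≤ (g s + g t) / 2) : ConvexOn ℝ univ g := by
  refine ⟨convex_univ, fun x _ y _ a b ha hb hab => ?_⟩
  let h : ℝ → ℝ := fun t => g (x + t * (y - x)) - g x - t * (g y - g x)
  have hb' : b ∈ Icc (0 : ℝ) 1 := ⟨hb, by linarith⟩
  have := nonpos_of_midpoint_le (g := h) (by fun_prop) (by simp [h]) (by simp [h])
    (fun s t => by
      have := hmid (x + s * (y - x)) (x + t * (y - x))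
      rw [show (x + s * (y - x) + (x + t * (y - x))) / 2 = x + (s + t) / 2 * (y - x) by ring]
        at this
      simp only [h]
      linarith) hb'
  simp only [h, smul_eq_mul] at this ⊢
  rw [show a * x + b * y = x + b * (y - x) by linear_combination x * hab,
    show a = 1 - b by linarith]
  linarith

lemma Lp_pair_sum_le {ι : Type*} {p : ℝ} (hp : 1 ≤ p) (s : Finset ι) {f g : ι → ℝ}
    (hf : ∀ i, 0 ≤ f i) (hg : ∀ i, 0 ≤ g i) :
    ((∑ i ∈ s, f i) ^ p + (∑ i ∈ s, g i) ^ p) ^ (1 / p) ≤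
      ∑ i ∈ s, (f i ^ p + g i ^ p) ^ (1 / p) := by
  have hp₀ : p ≠ 0 := by positivity
  induction s using Finset.cons_induction with
  | empty => simp [zero_rpow hp₀, zero_rpow (inv_ne_zero hp₀)]
  | cons j s _ ih =>
    have h := Real.Lp_add_le_of_nonneg univ (f := ![f j, g j]) (g := ![∑ i ∈ s, f i, ∑ i ∈ s, g i])
      hp (by simp [Fin.forall_fin_two, hf, hg]) (by simp [Fin.forall_fin_two, sum_nonneg, hf, hg])
    simp only [Fin.sum_univ_two, Matrix.cons_val_zero, Matrix.cons_val_one] at h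
    rw [sum_cons, sum_cons, sum_cons]
    linarith

section

variable {d : ℕ} {q : ℝ}

lemma continuous_pnorm (hq : 0 ≤ q) : Continuous (pnorm (d := d) q) := by
  unfold pnorm; fun_prop (disch := positivity)

lemma pnorm_sq (v : Fin d → ℝ) : pnorm q v ^ 2 = (∑ i, |v i| ^ q) ^ (2 / q) := by
  rw [pnorm, ← rpow_mul_natCast (sum_nonneg fun i _ => by positivity)]
  congr 1; push_cast; ring

lemma pnorm_smul (hq : q ≠ 0) (c : ℝ) (v : Fin d → ℝ) : pnorm q (c • v) = |c| * pnorm q v := by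
  simp only [pnorm, Pi.smul_apply, smul_eq_mul, abs_mul, mul_rpow (abs_nonneg _) (abs_nonneg _),
    ← mul_sum]
  rw [mul_rpow (by positivity) (sum_nonneg fun i _ => by positivity), one_div,
    rpow_rpow_inv (abs_nonneg c) hq]

lemma abs_rpow_rpow_two_div (hq : q ≠ 0) (x : ℝ) : (|x| ^ q) ^ (2 / q) = x ^ 2 := by
  rw [← rpow_mul (abs_nonneg x), mul_div_cancel₀ _ hq, rpow_two, sq_abs]

lemma pnorm_sq_add_pnorm_sq_le (hq₀ : 0 < q) (hq₂ : q ≤ 2) (a b : Fin d → ℝ) :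
    pnorm q a ^ 2 + pnorm q b ^ 2 ≤ (∑ i, (a i ^ 2 + b i ^ 2) ^ (q / 2)) ^ (2 / q) := by
  have hp : 1 ≤ 2 / q := by rw [le_div_iff₀ hq₀]; linarith
  have h := Lp_pair_sum_le hp univ (f := fun i => |a i| ^ q) (g := fun i => |b i| ^ q)
    (fun i => by positivity) (fun i => by positivity)
  simp only [abs_rpow_rpow_two_div hq₀.ne', one_div_div] at h
  have hX : 0 ≤ (∑ i, |a i| ^ q) ^ (2 / q) + (∑ i, |b i| ^ q) ^ (2 / q) := by positivity
  rw [pnorm_sq, pnorm_sq]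
  calc _ = (((∑ i, |a i| ^ q) ^ (2 / q) + (∑ i, |b i| ^ q) ^ (2 / q)) ^ (q / 2)) ^ (2 / q) := by
        rw [← rpow_mul hX, show q / 2 * (2 / q) = 1 by field_simp, rpow_one]
    _ ≤ _ := by gcongr

lemma pnorm_sq_add_mul_pnorm_sq_le (hq₁ : 1 ≤ q) (hq₂ : q ≤ 2) (a b : Fin d → ℝ) :
    pnorm q a ^ 2 + (q - 1) * pnorm q b ^ 2 ≤ (pnorm q (a + b) ^ 2 + pnorm q (a - b) ^ 2) / 2 := by
  have hq₀ : 0 < q := by linarith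
  set A := ∑ i, |a i + b i| ^ q
  set B := ∑ i, |a i - b i| ^ q
  calc pnorm q a ^ 2 + (q - 1) * pnorm q b ^ 2 = pnorm q a ^ 2 + pnorm q (√(q - 1) • b) ^ 2 := by
        rw [pnorm_smul hq₀.ne', mul_pow, sq_abs, sq_sqrt (by linarith)]
    _ ≤ (∑ i, (a i ^ 2 + (√(q - 1) * b i) ^ 2) ^ (q / 2)) ^ (2 / q) :=
        pnorm_sq_add_pnorm_sq_le hq₀ hq₂ _ _
    _ ≤ ((A + B) / 2) ^ (2 / q) := by
        rw [← sum_add_distrib, sum_div]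
        gcongr with i
        rw [mul_pow, sq_sqrt (by linarith)]
        exact rpow_sq_add_mul_sq_le hq₁ hq₂ (a i) (b i)
    _ ≤ (A ^ (2 / q) + B ^ (2 / q)) / 2 := by
        have h := (convexOn_rpow (p := 2 / q) (by rw [le_div_iff₀ hq₀]; linarith)).2
          (mem_Ici.2 (by positivity : 0 ≤ A)) (mem_Ici.2 (by positivity : 0 ≤ B))
          (by norm_num : (0 : ℝ) ≤ 1 / 2) (by norm_num : (0 : ℝ) ≤ 1 / 2) (by norm_num)
        simp only [smul_eq_mul] at h
        rw [show (A + B) / 2 = 1 / 2 * A + 1 / 2 * B by ring]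
        linarith
    _ = (pnorm q (a + b) ^ 2 + pnorm q (a - b) ^ 2) / 2 := by
        rw [pnorm_sq, pnorm_sq]; rfl

lemma convexOn_pnorm_sq_add_smul_sub_mul_sq (hq₁ : 1 ≤ q) (hq₂ : q ≤ 2) (u v : Fin d → ℝ) :
    ConvexOn ℝ univ fun t : ℝ => pnorm q (u + t • v) ^ 2 - (q - 1) * pnorm q v ^ 2 * t ^ 2 := by
  have hq₀ : 0 < q := by linarith
  refine convexOn_univ_of_continuous_of_midpoint_le
    ((((continuous_pnorm hq₀.le).comp (by fun_prop)).pow 2).sub (by fun_prop)) fun s t => ?_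
  have h := pnorm_sq_add_mul_pnorm_sq_le hq₁ hq₂ (u + ((s + t) / 2) • v) (((s - t) / 2) • v)
  rw [show u + ((s + t) / 2) • v + ((s - t) / 2) • v = u + s • v by module,
    show u + ((s + t) / 2) • v - ((s - t) / 2) • v = u + t • v by module,
    pnorm_smul hq₀.ne', mul_pow, sq_abs] at h
  linear_combination h

end

theorem stmt5_general (d : ℕ) (q : ℝ) (hq1 : 1 ≤ q) (hq2 : q ≤ 2)
    (w u : Fin d → ℝ) (α : ℝ) (hα0 : 0 < α) (hα1 : α < 1) :
    (1 / 2 : ℝ) * pnorm q (α • w + (1 - α) • u) ^ 2 ≤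
      α * ((1 / 2 : ℝ) * pnorm q w ^ 2) + (1 - α) * ((1 / 2 : ℝ) * pnorm q u ^ 2)
        - (q - 1) / 2 * α * (1 - α) * pnorm q (w - u) ^ 2 := by
  have h := (convexOn_pnorm_sq_add_smul_sub_mul_sq hq1 hq2 u (w - u)).2 (mem_univ 0) (mem_univ 1)
    (sub_nonneg.2 hα1.le) hα0.le (by ring)
  simp only [smul_eq_mul, mul_zero, mul_one, zero_add, zero_smul, add_zero, one_smul,
    add_sub_cancel] at h
  rw [show α • w + (1 - α) • u = u + α • (w - u) by module]
  linear_combination h / 2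

/-- For `q ∈ [1,2]`, the function `f(w) = (1/2) ‖w‖_q²` is `(q-1)`-strongly convex
with respect to `‖·‖_q` on `ℝ^d`. -/
theorem stmt5 (d : ℕ) (hd : 1 ≤ d) (q : ℝ) (hq1 : 1 ≤ q) (hq2 : q ≤ 2)
    (w u : Fin d → ℝ) (α : ℝ) (hα0 : 0 < α) (hα1 : α < 1) :
    (1 / 2 : ℝ) * pnorm q (α • w + (1 - α) • u) ^ 2 ≤
      α * ((1 / 2 : ℝ) * pnorm q w ^ 2) + (1 - α) * ((1 / 2 : ℝ) * pnorm q u ^ 2)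
        - (q - 1) / 2 * α * (1 - α) * pnorm q (w - u) ^ 2 :=
  stmt5_general d q hq1 hq2 w u α hα0 hα1
end

section
/- Let d ≥ 3, W > 0, X > 0, let 𝒲 = {w ∈ ℝ^d : ‖w‖_1 ≤ W} and 𝒳 = {x ∈ ℝ^d : ‖x‖_∞ ≤ X}. Let l : ℝ × 𝒴 → ℝ be a loss function that is ρ-Lipschitz in its first argument and let 𝒟 be a probability distribution over 𝒳 × 𝒴 (with suitable integrability so that the risk L(w) = E_{(x,y)∼𝒟}[l(⟨w,x⟩,y)] is defined on 𝒲). Then the empirical risk minimizer ŵ over 𝒲, computed from n i.i.d. examples from 𝒟, satisfies E[L(ŵ) − min_{w ∈ 𝒲} L(w)] ≤ C · ρ · X · W · √(ln(d)/n) for a universal constant C > 0 (independent of d, n, W, X, ρ, 𝒟). -/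
/-!
Fix `η > 0` and a finite `ε`-net `N` (in `ℓ¹` distance) of the `ℓ¹`-ball. Since the loss is
`ρ`-Lipschitz and `‖x‖_∞ ≤ X`, risk and empirical risk change by at most `ρ X ε` when a weight
vector is replaced by its neighbour in `N`, so the expected excess risk of the ERM is at most the
expected uniform deviation `sup_{v ∈ N} (L v - L̂ v)` plus `2 ρ X ε`. Passing to the finite class
`N` also makes every integrand measurable, although the ERM itself need not be.

Symmetrization with an independent ghost sample bounds that deviation by twice the empirical
Rademacher complexity of the loss class over `N`. The contraction principle replaces the losses by
the linear functions `ρ ⟨v, x⟩`; by `ℓ¹`/`ℓ∞` duality the supremum over the ball is at most `ρ W`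
times the maximum of the `2 d` signed coordinate sums, and Massart's lemma bounds the average of
that maximum by `X √(2 n log (2 d))`. As `2 log (2 d) ≤ 4 log d` for `d ≥ 2`, the constant `C = 4`
works, and `η → 0` gives the claim.
-/

open MeasureTheory Finset Real

/-- A uniformly random `σ : Fin n → Bool` encodes `n` independent Rademacher signs; expectations
over the signs are written `(2 ^ n)⁻¹ * ∑ σ, _`. -/
def rademacherSign (b : Bool) : ℝ := if b then -1 else 1

@[simp] lemma rademacherSign_true : rademacherSign true = -1 := rfl

@[simp] lemma rademacherSign_false : rademacherSign false = 1 := rfl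

@[simp] lemma abs_rademacherSign (b : Bool) : |rademacherSign b| = 1 := by
  cases b <;> simp

@[simp] lemma rademacherSign_not (b : Bool) : rademacherSign (!b) = -rademacherSign b := by
  cases b <;> simp

lemma abs_le_ciSup_sign_mul {ι : Type*} [Finite ι] (y : ι → ℝ) (i : ι) :
    |y i| ≤ ⨆ p : ι × Bool, rademacherSign p.2 * y p.1 := by
  have h := le_ciSup (Finite.bddAbove_range fun p : ι × Bool => rademacherSign p.2 * y p.1)
  rcases abs_cases (y i) with ⟨hy, -⟩ | ⟨hy, -⟩
  · simpa [hy] using h (i, false)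
  · simpa [hy] using h (i, true)

lemma abs_ciSup_le_sum_abs {ι : Type*} [Fintype ι] (f : ι → ℝ) : |⨆ i, f i| ≤ ∑ i, |f i| := by
  rcases isEmpty_or_nonempty ι with hι | hι
  · simp
  · obtain ⟨i, hi⟩ := exists_eq_ciSup_of_finite (f := f)
    exact hi ▸ single_le_sum (fun j _ => abs_nonneg (f j)) (mem_univ i)

lemma abs_sum_mul_le_sum_abs_mul {ι : Type*} [Fintype ι] (v y : ι → ℝ) {c : ℝ}
    (hy : ∀ i, |y i| ≤ c) : |∑ i, v i * y i| ≤ (∑ i, |v i|) * c := by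
  rw [sum_mul]
  refine (abs_sum_le_sum_abs _ _).trans (sum_le_sum fun i _ => ?_)
  rw [abs_mul]
  exact mul_le_mul_of_nonneg_left (hy i) (abs_nonneg _)

section Contraction

variable {ι : Type*}

lemma ciSup_add_add_ciSup_sub_le [Finite ι] [Nonempty ι] (a f g : ι → ℝ)
    (h : ∀ i j, f i - f j ≤ |g i - g j|) :
    (⨆ i, (a i + f i)) + ⨆ i, (a i - f i) ≤ (⨆ i, (a i + g i)) + ⨆ i, (a i - g i) := by
  obtain ⟨i, hi⟩ := exists_eq_ciSup_of_finite (f := fun i => a i + f i)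
  obtain ⟨j, hj⟩ := exists_eq_ciSup_of_finite (f := fun i => a i - f i)
  have le_plus := le_ciSup (Finite.bddAbove_range fun i => a i + g i)
  have le_minus := le_ciSup (Finite.bddAbove_range fun i => a i - g i)
  rw [← hi, ← hj]
  rcases abs_cases (g i - g j) with ⟨hg, -⟩ | ⟨hg, -⟩
  · linarith [h i j, le_plus i, le_minus j]
  · linarith [h i j, le_plus j, le_minus i]

lemma sum_bool_ciSup_add_sign_mul (a f : ι → ℝ) :
    ∑ b : Bool, ⨆ i, (a i + rademacherSign b * f i) = (⨆ i, (a i - f i)) + ⨆ i, (a i + f i) := by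
  simp [sub_eq_add_neg]

lemma sum_ciSup_add_sign_mul_succ {n : ℕ} (A : ι → ℝ) (χ : Fin (n + 1) → ι → ℝ) :
    ∑ σ : Fin (n + 1) → Bool, ⨆ i, (A i + ∑ t, rademacherSign (σ t) * χ t i) =
      ∑ b : Bool, ∑ τ : Fin n → Bool,
        ⨆ i, ((A i + ∑ t, rademacherSign (τ t) * χ t.succ i) + rademacherSign b * χ 0 i) := by
  rw [← Fintype.sum_equiv (Fin.consEquiv fun _ => Bool) (fun p => ⨆ i,
    ((A i + ∑ t, rademacherSign (p.2 t) * χ t.succ i) + rademacherSign p.1 * χ 0 i)) _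
    fun p => iSup_congr fun i => by simp [Fin.consEquiv, Fin.sum_univ_succ]; ring,
    Fintype.sum_prod_type]

/-- The Ledoux–Talagrand contraction principle for a finite class. -/
theorem sum_ciSup_add_sign_mul_le_of_contraction [Finite ι] [Nonempty ι] {n : ℕ} (A : ι → ℝ)
    (φ ψ : Fin n → ι → ℝ) (h : ∀ t i j, φ t i - φ t j ≤ |ψ t i - ψ t j|) :
    ∑ σ : Fin n → Bool, ⨆ i, (A i + ∑ t, rademacherSign (σ t) * φ t i) ≤
      ∑ σ : Fin n → Bool, ⨆ i, (A i + ∑ t, rademacherSign (σ t) * ψ t i) := by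
  induction n generalizing A with
  | zero => simp
  | succ n ih =>
    rw [sum_ciSup_add_sign_mul_succ A φ, sum_ciSup_add_sign_mul_succ A ψ]
    calc _ ≤ ∑ b : Bool, ∑ τ : Fin n → Bool,
            ⨆ i, ((A i + ∑ t, rademacherSign (τ t) * φ t.succ i) + rademacherSign b * ψ 0 i) := by
          rw [sum_comm]
          conv_rhs => rw [sum_comm]
          refine sum_le_sum fun τ _ => ?_
          simp only [sum_bool_ciSup_add_sign_mul]
          linarith [ciSup_add_add_ciSup_sub_le
            (fun i => A i + ∑ t, rademacherSign (τ t) * φ t.succ i) (φ 0) (ψ 0) (h 0)]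
      _ ≤ _ := by
          refine sum_le_sum fun b _ => ?_
          simpa only [add_right_comm] using ih (fun i => A i + rademacherSign b * ψ 0 i)
            (fun t => φ t.succ) (fun t => ψ t.succ) fun t => h t.succ

end Contraction

section Massart

lemma sum_exp_sign_mul {n : ℕ} (x : Fin n → ℝ) :
    ∑ σ : Fin n → Bool, exp (∑ t, rademacherSign (σ t) * x t) = ∏ t, 2 * cosh (x t) := by
  simp_rw [exp_sum]
  rw [← Fintype.prod_sum fun t b => exp (rademacherSign b * x t)]
  refine prod_congr rfl fun t _ => ?_
  simp [cosh_eq, add_comm]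
  ring

lemma sum_exp_sign_mul_le {n : ℕ} {c : ℝ} (x : Fin n → ℝ) (hx : ∀ t, |x t| ≤ c) :
    ∑ σ : Fin n → Bool, exp (∑ t, rademacherSign (σ t) * x t) ≤ 2 ^ n * exp (n * c ^ 2 / 2) := by
  rw [sum_exp_sign_mul]
  calc ∏ t, 2 * cosh (x t) ≤ ∏ _t : Fin n, 2 * exp (c ^ 2 / 2) := by
        gcongr with t
        have hxc : x t ^ 2 ≤ c ^ 2 := sq_le_sq' (abs_le.1 (hx t)).1 (abs_le.1 (hx t)).2
        exact (cosh_le_exp_half_sq _).trans (exp_le_exp.2 (by linarith))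
    _ = 2 ^ n * exp (n * c ^ 2 / 2) := by
        rw [prod_const, card_fin, mul_pow, ← exp_nat_mul, mul_div_assoc]

variable {ι : Type*} [Fintype ι] [Nonempty ι]

lemma mul_avg_ciSup_sum_sign_mul_le {n : ℕ} {c : ℝ} (a : Fin n → ι → ℝ)
    (ha : ∀ t i, |a t i| ≤ c) {s : ℝ} (hs : 0 < s) :
    s * ((2 ^ n)⁻¹ * ∑ σ : Fin n → Bool, ⨆ i, ∑ t, rademacherSign (σ t) * a t i) ≤
      log (Fintype.card ι) + n * (s * c) ^ 2 / 2 := by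
  set M : (Fin n → Bool) → ℝ := fun σ => ⨆ i, ∑ t, rademacherSign (σ t) * a t i
  have jensen : exp (s * ((2 ^ n)⁻¹ * ∑ σ, M σ)) ≤ (2 ^ n)⁻¹ * ∑ σ, exp (s * M σ) := by
    have := convexOn_exp.map_sum_le (t := univ) (w := fun _ : Fin n → Bool => (2 ^ n : ℝ)⁻¹)
      (p := fun σ => s * M σ) (fun _ _ => by positivity) (by simp) (fun _ _ => Set.mem_univ _)
    simpa [mul_sum, mul_left_comm] using this
  have union : ∀ σ, exp (s * M σ) ≤ ∑ i, exp (∑ t, rademacherSign (σ t) * (s * a t i)) := by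
    intro σ
    obtain ⟨i, hi⟩ := exists_eq_ciSup_of_finite (f := fun i => ∑ t, rademacherSign (σ t) * a t i)
    refine le_of_eq_of_le ?_ (single_le_sum (fun i _ => (exp_pos _).le) (mem_univ i))
    simp only [M, ← hi, mul_sum, mul_left_comm]
  have bound : (2 ^ n)⁻¹ * ∑ σ, exp (s * M σ) ≤ Fintype.card ι * exp (n * (s * c) ^ 2 / 2) := by
    calc _ ≤ (2 ^ n)⁻¹ * ∑ σ : Fin n → Bool, ∑ i,
            exp (∑ t, rademacherSign (σ t) * (s * a t i)) := by
          gcongr with σ; exact union σ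
      _ = ∑ i, (2 ^ n)⁻¹ * ∑ σ : Fin n → Bool,
            exp (∑ t, rademacherSign (σ t) * (s * a t i)) := by
          rw [sum_comm, mul_sum]
      _ ≤ ∑ _i : ι, (2 ^ n)⁻¹ * (2 ^ n * exp (n * (s * c) ^ 2 / 2)) := by
          gcongr with i
          exact sum_exp_sign_mul_le _ fun t => by
            rw [abs_mul, abs_of_pos hs]; exact mul_le_mul_of_nonneg_left (ha t i) hs.le
      _ = _ := by simp
  have hcard : (0 : ℝ) < Fintype.card ι := by exact_mod_cast Fintype.card_pos
  calc _ ≤ log (Fintype.card ι * exp (n * (s * c) ^ 2 / 2)) :=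
        (le_log_iff_exp_le (by positivity)).2 (jensen.trans bound)
    _ = _ := by rw [log_mul hcard.ne' (exp_pos _).ne', log_exp]

theorem massart {n : ℕ} (hn : 0 < n) {c : ℝ} (hc : 0 < c) (a : Fin n → ι → ℝ)
    (ha : ∀ t i, |a t i| ≤ c) (hι : 1 < Fintype.card ι) :
    (2 ^ n)⁻¹ * ∑ σ : Fin n → Bool, ⨆ i, ∑ t, rademacherSign (σ t) * a t i ≤
      c * √(2 * n * log (Fintype.card ι)) := by
  set L := log (Fintype.card ι)
  have hL : 0 < L := log_pos (by exact_mod_cast hι)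
  have hn' : (0 : ℝ) < n := by exact_mod_cast hn
  set r := √(2 * n * L)
  have hr : 0 < r := sqrt_pos.2 (by positivity)
  have hr2 : r ^ 2 = 2 * n * L := sq_sqrt (by positivity)
  -- This choice of `s` makes both terms of `mul_avg_ciSup_sum_sign_mul_le` equal to `L`.
  have hs : 0 < r / (n * c) := by positivity
  have key := mul_avg_ciSup_sum_sign_mul_le a ha hs
  have e1 : (n : ℝ) * (r / (n * c) * c) ^ 2 / 2 = L := by field_simp; linarith
  have e2 : r / (n * c) * (c * r) = L + L := by field_simp; linarith
  rw [e1] at key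
  exact le_of_mul_le_mul_left (key.trans_eq e2.symm) hs

end Massart

lemma MeasureTheory.Integrable.ciSup {X ι : Type*} [MeasurableSpace X] {μ : Measure X}
    [Fintype ι] {F : ι → X → ℝ} (hF : ∀ i, Integrable (F i) μ) :
    Integrable (fun x => ⨆ i, F i x) μ :=
  (integrable_finsetSum univ fun i _ => (hF i).abs).mono'
    (AEMeasurable.iSup fun i => (hF i).aemeasurable).aestronglyMeasurable
    (ae_of_all _ fun x => by simpa using abs_ciSup_le_sum_abs fun i => F i x)

lemma MeasureTheory.MeasurePreserving.integral_comp_of_aestronglyMeasurable {α β : Type*}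
    [MeasurableSpace α] [MeasurableSpace β] {μ : Measure α} {ν : Measure β} {T : α → β}
    (hT : MeasurePreserving T μ ν) {f : β → ℝ} (hf : AEStronglyMeasurable f ν) :
    ∫ x, f (T x) ∂μ = ∫ y, f y ∂ν := by
  rw [← hT.map_eq] at hf ⊢
  exact (integral_map hT.measurable.aemeasurable hf).symm

section Sampling

variable {Z : Type*} {n : ℕ}

noncomputable def empMean (f : Z → ℝ) (S : Fin n → Z) : ℝ := (n : ℝ)⁻¹ * ∑ t, f (S t)

noncomputable def empRademacher {ι : Type*} (F : ι → Z → ℝ) (S : Fin n → Z) : ℝ :=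
  (2 ^ n)⁻¹ * ∑ σ : Fin n → Bool, ⨆ i, (n : ℝ)⁻¹ * ∑ t, rademacherSign (σ t) * F i (S t)

def swapAt (σ : Fin n → Bool) (p : (Fin n → Z) × (Fin n → Z)) : (Fin n → Z) × (Fin n → Z) :=
  (fun t => if σ t then p.2 t else p.1 t, fun t => if σ t then p.1 t else p.2 t)

lemma empMean_swapAt_sub (f : Z → ℝ) (σ : Fin n → Bool) (p : (Fin n → Z) × (Fin n → Z)) :
    empMean f (swapAt σ p).2 - empMean f (swapAt σ p).1 =
      (n : ℝ)⁻¹ * ∑ t, rademacherSign (σ t) * (f (p.2 t) - f (p.1 t)) := by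
  simp only [empMean, swapAt, ← mul_sub, ← sum_sub_distrib]
  congr 1
  refine sum_congr rfl fun t _ => ?_
  by_cases h : σ t <;> simp [h]

lemma empMean_le_empMean_add (hn : 0 < n) {f g : Z → ℝ} {S : Fin n → Z} {δ : ℝ}
    (h : ∀ t, f (S t) ≤ g (S t) + δ) : empMean f S ≤ empMean g S + δ := by
  have hn' : (0 : ℝ) < n := by exact_mod_cast hn
  have := sum_le_sum fun t (_ : t ∈ univ) => h t
  rw [sum_add_distrib, sum_const, card_univ, Fintype.card_fin, nsmul_eq_mul] at this
  simp only [empMean]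
  rw [inv_mul_le_iff₀ hn', mul_add, mul_inv_cancel_left₀ hn'.ne']
  linarith

lemma avg_ciSup_swapAt_le {ι : Type*} [Finite ι] [Nonempty ι] (F : ι → Z → ℝ)
    (p : (Fin n → Z) × (Fin n → Z)) :
    (2 ^ n)⁻¹ * ∑ σ : Fin n → Bool,
        ⨆ i, (empMean (F i) (swapAt σ p).2 - empMean (F i) (swapAt σ p).1) ≤
      empRademacher F p.2 + empRademacher F p.1 := by
  have split : ∀ σ : Fin n → Bool,
      ⨆ i, (empMean (F i) (swapAt σ p).2 - empMean (F i) (swapAt σ p).1) ≤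
        (⨆ i, (n : ℝ)⁻¹ * ∑ t, rademacherSign (σ t) * F i (p.2 t)) +
          ⨆ i, (n : ℝ)⁻¹ * ∑ t, rademacherSign (!σ t) * F i (p.1 t) := by
    intro σ
    refine le_of_eq_of_le (iSup_congr fun i => ?_)
      (ciSup_add_le_ciSup_add_ciSup (Finite.bddAbove_range _) (Finite.bddAbove_range _))
    rw [empMean_swapAt_sub, ← mul_add, ← sum_add_distrib]
    simp only [rademacherSign_not]
    congr 1
    exact sum_congr rfl fun t _ => by ring
  have flip : ∑ σ : Fin n → Bool, ⨆ i, (n : ℝ)⁻¹ * ∑ t, rademacherSign (!σ t) * F i (p.1 t) =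
      ∑ σ : Fin n → Bool, ⨆ i, (n : ℝ)⁻¹ * ∑ t, rademacherSign (σ t) * F i (p.1 t) :=
    Fintype.sum_equiv (Equiv.piCongrRight fun _ => Equiv.boolNot) _ _ fun _ => rfl
  calc _ ≤ (2 ^ n)⁻¹ * ∑ σ : Fin n → Bool,
        ((⨆ i, (n : ℝ)⁻¹ * ∑ t, rademacherSign (σ t) * F i (p.2 t)) +
          ⨆ i, (n : ℝ)⁻¹ * ∑ t, rademacherSign (!σ t) * F i (p.1 t)) := by
        gcongr with σ; exact split σ
    _ = _ := by rw [sum_add_distrib, flip, mul_add]; rfl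

variable [MeasurableSpace Z]

lemma measurePreserving_swapAt (μ : Measure Z) [SigmaFinite μ] (σ : Fin n → Bool) :
    MeasurePreserving (swapAt σ) ((Measure.pi fun _ : Fin n => μ).prod (Measure.pi fun _ => μ))
      ((Measure.pi fun _ : Fin n => μ).prod (Measure.pi fun _ => μ)) := by
  have he := measurePreserving_arrowProdEquivProdArrow Z Z (Fin n) (fun _ => μ) (fun _ => μ)
  have hswap : MeasurePreserving (fun (q : Fin n → Z × Z) t => if σ t then (q t).swap else q t)
      (Measure.pi fun _ => μ.prod μ) (Measure.pi fun _ => μ.prod μ) :=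
    measurePreserving_pi (fun _ => μ.prod μ) (fun _ => μ.prod μ)
      (f := fun t (z : Z × Z) => if σ t then z.swap else z) fun t => by
      by_cases h : σ t
      · simp only [h, if_true]; exact Measure.measurePreserving_swap
      · simp only [h]; exact MeasurePreserving.id _
  convert he.comp (hswap.comp he.symm) using 1
  ext p t <;> by_cases h : σ t <;> simp [swapAt, h, MeasurableEquiv.arrowProdEquivProdArrow,
    Equiv.arrowProdEquivProdArrow]

variable {μ : Measure Z} [IsProbabilityMeasure μ]

lemma ae_forall_apply_of_ae {p : Z → Prop} (h : ∀ᵐ z ∂μ, p z) :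
    ∀ᵐ S ∂(Measure.pi fun _ : Fin n => μ), ∀ t, p (S t) :=
  ae_all_iff.2 fun t => (measurePreserving_eval (fun _ => μ) t).quasiMeasurePreserving.ae h

lemma integrable_empMean {f : Z → ℝ} (hf : Integrable f μ) :
    Integrable (empMean f) (Measure.pi fun _ : Fin n => μ) :=
  (integrable_finsetSum _ fun _ _ => integrable_comp_eval (μ := fun _ => μ) hf).const_mul _

lemma integral_empMean (hn : 0 < n) {f : Z → ℝ} (hf : Integrable f μ) :
    ∫ S, empMean f S ∂(Measure.pi fun _ : Fin n => μ) = ∫ z, f z ∂μ := by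
  simp only [empMean]
  rw [integral_const_mul,
    integral_finsetSum _ fun _ _ => integrable_comp_eval (μ := fun _ => μ) hf]
  simp only [integral_comp_eval (μ := fun _ => μ) hf.aestronglyMeasurable, sum_const, card_univ,
    Fintype.card_fin, nsmul_eq_mul]
  field_simp

lemma integrable_empRademacher {ι : Type*} [Fintype ι] {F : ι → Z → ℝ}
    (hF : ∀ i, Integrable (F i) μ) :
    Integrable (empRademacher F) (Measure.pi fun _ : Fin n => μ) :=
  (integrable_finsetSum _ fun _ _ => Integrable.ciSup fun i => (integrable_finsetSum _
    fun _ _ => (integrable_comp_eval (μ := fun _ => μ) (hF i)).const_mul _).const_mul _).const_mul _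

lemma ciSup_sub_empMean_le_integral_ciSup (hn : 0 < n) {ι : Type*} [Fintype ι] [Nonempty ι]
    {F : ι → Z → ℝ} (hF : ∀ i, Integrable (F i) μ) (S : Fin n → Z) :
    ⨆ i, (∫ z, F i z ∂μ - empMean (F i) S) ≤
      ∫ S', ⨆ i, (empMean (F i) S' - empMean (F i) S) ∂(Measure.pi fun _ : Fin n => μ) := by
  have hmean := fun i => integrable_empMean (n := n) (hF i)
  refine ciSup_le fun i => ?_
  rw [← integral_empMean hn (hF i)]
  calc _ = ∫ S', (empMean (F i) S' - empMean (F i) S) ∂(Measure.pi fun _ : Fin n => μ) := by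
        rw [integral_sub (hmean i) (integrable_const _)]; simp
    _ ≤ _ := integral_mono ((hmean i).sub (integrable_const _))
        (Integrable.ciSup (F := fun i S' => empMean (F i) S' - empMean (F i) S)
          fun i => (hmean i).sub (integrable_const _))
        fun S' => le_ciSup (f := fun i => empMean (F i) S' - empMean (F i) S)
          (Finite.bddAbove_range _) i

theorem integral_ciSup_sub_empMean_le_two_mul_empRademacher (hn : 0 < n) {ι : Type*}
    [Fintype ι] [Nonempty ι] {F : ι → Z → ℝ} (hF : ∀ i, Integrable (F i) μ) :
    ∫ S, ⨆ i, (∫ z, F i z ∂μ - empMean (F i) S) ∂(Measure.pi fun _ : Fin n => μ) ≤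
      2 * ∫ S, empRademacher F S ∂(Measure.pi fun _ : Fin n => μ) := by
  set μn := Measure.pi fun _ : Fin n => μ
  set H : (Fin n → Z) × (Fin n → Z) → ℝ := fun p => ⨆ i, (empMean (F i) p.2 - empMean (F i) p.1)
  have hmean := fun i => integrable_empMean (n := n) (hF i)
  have hH : Integrable H (μn.prod μn) :=
    Integrable.ciSup fun i => ((hmean i).comp_snd μn).sub ((hmean i).comp_fst μn)
  have hHσ : ∀ σ, Integrable (fun p => H (swapAt σ p)) (μn.prod μn) := fun σ =>
    ((measurePreserving_swapAt μ σ).integrable_comp hH.aestronglyMeasurable).2 hH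
  have swap : ∫ p, H p ∂(μn.prod μn) =
      ∫ p, (2 ^ n)⁻¹ * ∑ σ : Fin n → Bool, H (swapAt σ p) ∂(μn.prod μn) := by
    rw [integral_const_mul, integral_finsetSum _ fun σ _ => hHσ σ,
      sum_congr rfl fun σ _ => (measurePreserving_swapAt μ σ).integral_comp_of_aestronglyMeasurable
        hH.aestronglyMeasurable, sum_const, card_univ, Fintype.card_fun, Fintype.card_bool,
      Fintype.card_fin, nsmul_eq_mul]
    push_cast
    field_simp
    rfl
  have hR := integrable_empRademacher (n := n) hF
  calc _ ≤ ∫ S, ∫ S', H (S, S') ∂μn ∂μn :=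
        integral_mono (Integrable.ciSup fun i => (integrable_const _).sub (hmean i))
          hH.integral_prod_left (ciSup_sub_empMean_le_integral_ciSup hn hF)
    _ = ∫ p, H p ∂(μn.prod μn) := (integral_prod H hH).symm
    _ ≤ ∫ p, (empRademacher F p.2 + empRademacher F p.1) ∂(μn.prod μn) := by
        rw [swap]
        exact integral_mono ((integrable_finsetSum _ fun σ _ => hHσ σ).const_mul _)
          ((hR.comp_snd μn).add (hR.comp_fst μn)) fun p => avg_ciSup_swapAt_le F p
    _ = _ := by
        rw [integral_add (hR.comp_snd μn) (hR.comp_fst μn), integral_fun_snd, integral_fun_fst]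
        simp; ring

theorem integral_risk_erm_sub_le (hn : 0 < n) {V : Type*} {f : V → Z → ℝ} {K : Set V}
    (hf : ∀ v ∈ K, Integrable (f v) μ) {good : Z → Prop} (hgood : ∀ᵐ z ∂μ, good z)
    {N : Finset V} (hNK : ∀ v ∈ N, v ∈ K) {δ : ℝ}
    (hnet : ∀ u ∈ K, ∃ v ∈ N, ∀ z, good z → |f u z - f v z| ≤ δ)
    {erm : (Fin n → Z) → V} (herm : ∀ S, erm S ∈ K)
    (hmin : ∀ S, ∀ w ∈ K, ∑ t, f (erm S) (S t) ≤ ∑ t, f w (S t))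
    (herm_int : Integrable (fun S => ∫ z, f (erm S) z ∂μ) (Measure.pi fun _ : Fin n => μ))
    {w : V} (hw : w ∈ K) :
    ∫ S, ∫ z, f (erm S) z ∂μ ∂(Measure.pi fun _ : Fin n => μ) - ∫ z, f w z ∂μ ≤
      ∫ S, ⨆ v : N, (∫ z, f v z ∂μ - empMean (f v) S) ∂(Measure.pi fun _ : Fin n => μ) +
        2 * δ := by
  have pointwise : ∀ᵐ S ∂(Measure.pi fun _ : Fin n => μ),
      ∫ z, f (erm S) z ∂μ - empMean (f w) S ≤
        (⨆ v : N, (∫ z, f v z ∂μ - empMean (f v) S)) + 2 * δ := by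
    filter_upwards [ae_forall_apply_of_ae hgood] with S hS
    obtain ⟨v, hvN, hv⟩ := hnet (erm S) (herm S)
    have risk : ∫ z, f (erm S) z ∂μ ≤ ∫ z, f v z ∂μ + δ := by
      rw [← sub_le_iff_le_add', ← integral_sub (hf _ (herm S)) (hf v (hNK v hvN))]
      exact (integral_mono_ae ((hf _ (herm S)).sub (hf v (hNK v hvN))) (integrable_const δ)
        (hgood.mono fun z hz => (le_abs_self _).trans (hv z hz))).trans_eq (by simp)
    have emp : empMean (f v) S ≤ empMean (f (erm S)) S + δ :=
      empMean_le_empMean_add hn fun t => by linarith [(abs_le.1 (hv (S t) (hS t))).1]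
    have erm_le : empMean (f (erm S)) S ≤ empMean (f w) S :=
      mul_le_mul_of_nonneg_left (hmin S w hw) (by positivity)
    have sup := le_ciSup (f := fun v : N => ∫ z, f v z ∂μ - empMean (f v) S)
      (Finite.bddAbove_range _) ⟨v, hvN⟩
    dsimp only at sup
    linarith
  have hsup : Integrable (fun S => ⨆ v : N, (∫ z, f v z ∂μ - empMean (f v) S))
      (Measure.pi fun _ : Fin n => μ) :=
    Integrable.ciSup fun v => (integrable_const _).sub (integrable_empMean (hf v (hNK v v.2)))
  calc _ = ∫ S, (∫ z, f (erm S) z ∂μ - empMean (f w) S) ∂(Measure.pi fun _ : Fin n => μ) := by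
        rw [integral_sub herm_int (integrable_empMean (hf w hw)), integral_empMean hn (hf w hw)]
    _ ≤ ∫ S, ((⨆ v : N, (∫ z, f v z ∂μ - empMean (f v) S)) + 2 * δ)
          ∂(Measure.pi fun _ : Fin n => μ) :=
        integral_mono_ae (herm_int.sub (integrable_empMean (hf w hw)))
          (hsup.add (integrable_const _)) pointwise
    _ = _ := by rw [integral_add hsup (integrable_const _)]; simp

end Sampling

section LinearPredictors

variable {d : ℕ} {𝒴 : Type*}

lemma exists_finset_l1_net (d : ℕ) (W : ℝ) {ε : ℝ} (hε : 0 < ε) :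
    ∃ N : Finset (Fin d → ℝ), (∀ v ∈ N, ∑ i, |v i| ≤ W) ∧
      ∀ w : Fin d → ℝ, ∑ i, |w i| ≤ W → ∃ v ∈ N, ∑ i, |w i - v i| ≤ ε := by
  set K := {w : Fin d → ℝ | ∑ i, |w i| ≤ W}
  have hK : IsCompact K := by
    refine (isCompact_closedBall 0 |W|).of_isClosed_subset
      (isClosed_le (by fun_prop) continuous_const) fun w hw => ?_
    refine mem_closedBall_zero_iff.2 ((pi_norm_le_iff_of_nonneg (abs_nonneg W)).2 fun i => ?_)
    exact ((single_le_sum (fun j _ => abs_nonneg (w j)) (mem_univ i)).trans hw).trans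
      (le_abs_self W)
  -- A cover by sup-norm balls of radius `ε / (d + 1)` is an `ℓ¹` cover of radius `ε`.
  obtain ⟨t, htK, ht, hcover⟩ :=
    finite_cover_balls_of_compact hK (e := ε / (d + 1)) (by positivity)
  refine ⟨ht.toFinset, fun v hv => htK (ht.mem_toFinset.1 hv), fun w hw => ?_⟩
  obtain ⟨v, hv, hwv⟩ := Set.mem_iUnion₂.1 (hcover hw)
  refine ⟨v, ht.mem_toFinset.2 hv, ?_⟩
  calc ∑ i, |w i - v i| ≤ ∑ _i : Fin d, ε / (d + 1) :=
        sum_le_sum fun i _ => (dist_le_pi_dist w v i).trans (Metric.mem_ball.1 hwv).le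
    _ ≤ ε := by
        rw [sum_const, card_univ, Fintype.card_fin, nsmul_eq_mul, mul_div_assoc']
        exact div_le_of_le_mul₀ (by positivity) hε.le (by nlinarith)

def linearLoss (l : ℝ → 𝒴 → ℝ) (v : Fin d → ℝ) (q : (Fin d → ℝ) × 𝒴) : ℝ :=
  l (∑ i, v i * q.1 i) q.2

lemma abs_linearLoss_sub_le {l : ℝ → 𝒴 → ℝ} {ρ : ℝ} (hρ : 0 ≤ ρ)
    (hl : ∀ y a b, |l a y - l b y| ≤ ρ * |a - b|) (v u : Fin d → ℝ) {q : (Fin d → ℝ) × 𝒴}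
    {Xb : ℝ} (hq : ∀ i, |q.1 i| ≤ Xb) :
    |linearLoss l v q - linearLoss l u q| ≤ ρ * ((∑ i, |v i - u i|) * Xb) := by
  refine (hl _ _ _).trans (mul_le_mul_of_nonneg_left ?_ hρ)
  rw [← sum_sub_distrib]
  simpa only [← sub_mul] using abs_sum_mul_le_sum_abs_mul (fun i => v i - u i) _ hq

lemma sum_sign_mul_linear_le {n : ℕ} (hd : 0 < d) {ρ W : ℝ} (hρ : 0 ≤ ρ)
    (x : Fin n → Fin d → ℝ) (σ : Fin n → Bool) {v : Fin d → ℝ} (hv : ∑ k, |v k| ≤ W) :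
    ∑ t, rademacherSign (σ t) * (ρ * ∑ k, v k * x t k) ≤
      ρ * W * ⨆ p : Fin d × Bool, ∑ t, rademacherSign (σ t) * (rademacherSign p.2 * x t p.1) := by
  set M := ⨆ p : Fin d × Bool, ∑ t, rademacherSign (σ t) * (rademacherSign p.2 * x t p.1)
  have hM : ∀ k, |∑ t, rademacherSign (σ t) * x t k| ≤ M := fun k => by
    refine (abs_le_ciSup_sign_mul (fun k => ∑ t, rademacherSign (σ t) * x t k) k).trans_eq
      (iSup_congr fun p => ?_)
    rw [mul_sum]
    exact sum_congr rfl fun t _ => by ring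
  calc _ = ρ * ∑ k, v k * ∑ t, rademacherSign (σ t) * x t k := by
        simp only [mul_sum]
        rw [sum_comm]
        exact sum_congr rfl fun t _ => sum_congr rfl fun k _ => by ring
    _ ≤ ρ * ((∑ k, |v k|) * M) := mul_le_mul_of_nonneg_left
        ((le_abs_self _).trans (abs_sum_mul_le_sum_abs_mul _ _ hM)) hρ
    _ ≤ ρ * W * M := by
        rw [← mul_assoc]
        exact mul_le_mul_of_nonneg_right (mul_le_mul_of_nonneg_left hv hρ)
          ((abs_nonneg _).trans (hM ⟨0, hd⟩))

lemma inv_mul_sqrt_mul (n : ℕ) (a : ℝ) : (n : ℝ)⁻¹ * √(n * a) = √(a / n) := by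
  rcases (Nat.cast_nonneg (α := ℝ) n).eq_or_lt with hn | hn
  · simp [← hn]
  rw [show a / n = n * a / n ^ 2 by field_simp, sqrt_div' _ (by positivity), sqrt_sq hn.le,
    inv_mul_eq_div]

theorem empRademacher_linearLoss_le {n : ℕ} (hn : 0 < n) (hd : 0 < d) {l : ℝ → 𝒴 → ℝ} {ρ : ℝ}
    (hρ : 0 ≤ ρ) (hl : ∀ y a b, |l a y - l b y| ≤ ρ * |a - b|) {W : ℝ}
    {N : Finset (Fin d → ℝ)} [Nonempty N] (hN : ∀ v ∈ N, ∑ i, |v i| ≤ W) {Xb : ℝ}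
    (hXb : 0 < Xb) {S : Fin n → (Fin d → ℝ) × 𝒴} (hS : ∀ t i, |(S t).1 i| ≤ Xb) :
    empRademacher (fun v : N => linearLoss l v) S ≤ ρ * W * Xb * √(2 * log (2 * d) / n) := by
  set x : Fin n → Fin d → ℝ := fun t => (S t).1
  set M : (Fin n → Bool) → ℝ := fun σ =>
    ⨆ p : Fin d × Bool, ∑ t, rademacherSign (σ t) * (rademacherSign p.2 * x t p.1)
  have contraction :
      ∑ σ : Fin n → Bool, ⨆ v : N, ∑ t, rademacherSign (σ t) * linearLoss l v (S t) ≤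
        ∑ σ : Fin n → Bool, ⨆ v : N, ∑ t, rademacherSign (σ t) * (ρ * ∑ k, v.1 k * x t k) := by
    simpa using sum_ciSup_add_sign_mul_le_of_contraction 0 (fun t (v : N) => linearLoss l v (S t))
      (fun t v => ρ * ∑ k, v.1 k * x t k) fun t v u => by
        rw [← mul_sub, abs_mul, abs_of_nonneg hρ]
        exact (le_abs_self _).trans (hl _ _ _)
  have linear : ∀ σ : Fin n → Bool,
      ⨆ v : N, ∑ t, rademacherSign (σ t) * (ρ * ∑ k, v.1 k * x t k) ≤ ρ * W * M σ :=
    fun σ => ciSup_le fun v => sum_sign_mul_linear_le hd hρ x σ (hN v v.2)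
  have : Nonempty (Fin d) := ⟨⟨0, hd⟩⟩
  have hW : 0 ≤ W :=
    let ⟨v⟩ := ‹Nonempty N›; (sum_nonneg fun i _ => abs_nonneg _).trans (hN v v.2)
  have massart := massart hn hXb (fun t (p : Fin d × Bool) => rademacherSign p.2 * x t p.1)
    (fun t p => by simpa [abs_mul] using hS t p.1) (by simp; omega)
  rw [show Fintype.card (Fin d × Bool) = 2 * d by simp [mul_comm]] at massart
  have hn' : (0 : ℝ) ≤ (n : ℝ)⁻¹ := by positivity
  calc empRademacher (fun v : N => linearLoss l v) S
      = (n : ℝ)⁻¹ * ((2 ^ n)⁻¹ *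
          ∑ σ : Fin n → Bool, ⨆ v : N, ∑ t, rademacherSign (σ t) * linearLoss l v (S t)) := by
        simp only [empRademacher, ← Real.mul_iSup_of_nonneg hn', ← mul_sum]; ring
    _ ≤ (n : ℝ)⁻¹ * ((2 ^ n)⁻¹ * ∑ σ : Fin n → Bool, ρ * W * M σ) :=
        mul_le_mul_of_nonneg_left (mul_le_mul_of_nonneg_left
          (contraction.trans (sum_le_sum fun σ _ => linear σ)) (by positivity)) hn'
    _ = (n : ℝ)⁻¹ * (ρ * W * ((2 ^ n)⁻¹ * ∑ σ : Fin n → Bool, M σ)) := by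
        rw [← mul_sum]; ring
    _ ≤ (n : ℝ)⁻¹ * (ρ * W * (Xb * √(2 * n * log (2 * d : ℕ)))) :=
        mul_le_mul_of_nonneg_left (mul_le_mul_of_nonneg_left massart (mul_nonneg hρ hW)) hn'
    _ = _ := by
        rw [mul_assoc 2, mul_left_comm 2, ← inv_mul_sqrt_mul]
        push_cast
        ring

theorem integral_empRademacher_linearLoss_le [MeasurableSpace 𝒴] {n : ℕ} (hn : 0 < n)
    (hd : 0 < d) {l : ℝ → 𝒴 → ℝ} {ρ : ℝ} (hρ : 0 ≤ ρ)
    (hl : ∀ y a b, |l a y - l b y| ≤ ρ * |a - b|) {W : ℝ} {N : Finset (Fin d → ℝ)} [Nonempty N]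
    (hN : ∀ v ∈ N, ∑ i, |v i| ≤ W) {Xb : ℝ} (hXb : 0 < Xb) {μ : Measure ((Fin d → ℝ) × 𝒴)}
    [IsProbabilityMeasure μ] (hX : ∀ᵐ q ∂μ, ∀ i, |q.1 i| ≤ Xb)
    (hint : ∀ v : N, Integrable (linearLoss l v) μ) :
    ∫ S, empRademacher (fun v : N => linearLoss l v) S ∂(Measure.pi fun _ : Fin n => μ) ≤
      ρ * W * Xb * √(2 * log (2 * d) / n) :=
  (integral_mono_ae (integrable_empRademacher hint) (integrable_const _)
    ((ae_forall_apply_of_ae hX).mono fun _ hS =>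
      empRademacher_linearLoss_le hn hd hρ hl hN hXb hS)).trans_eq (by simp)

end LinearPredictors

lemma sqrt_two_mul_log_two_mul_div_le {d : ℝ} (hd : 2 ≤ d) (n : ℕ) :
    √(2 * log (2 * d) / n) ≤ 2 * √(log d / n) := by
  have hlog : log (2 * d) ≤ 2 * log d := by
    rw [← log_rpow (by positivity), rpow_two]
    exact log_le_log (by positivity) (by nlinarith)
  calc √(2 * log (2 * d) / n) ≤ √(2 ^ 2 * (log d / n)) := by
        rw [← mul_div_assoc]
        exact sqrt_le_sqrt (div_le_div_of_nonneg_right (by linarith) (Nat.cast_nonneg n))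
    _ = 2 * √(log d / n) := by rw [sqrt_mul (by norm_num), sqrt_sq (by norm_num)]

/-- Batch learning over the `ℓ₁`-ball: there is a universal constant `C > 0` such that for
every dimension `d ≥ 3`, label space `𝒴`, radius `W > 0`, instance bound `Xb > 0`,
`ρ`-Lipschitz loss `l`, distribution `μ` supported on `{x : ‖x‖_∞ ≤ Xb} × 𝒴`, and sample
size `n ≥ 1`, every empirical risk minimizer `erm` over `𝒲 = {w : ‖w‖₁ ≤ W}` has expected
excess risk at most `C · ρ · Xb · W · √(ln d / n)`. -/
theorem stmt12 :
    ∃ C : ℝ, 0 < C ∧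
      ∀ (d : ℕ), 3 ≤ d →
      ∀ (𝒴 : Type) (_ : MeasurableSpace 𝒴),
      ∀ (W Xb ρ : ℝ), 0 < W → 0 < Xb → 0 ≤ ρ →
      ∀ l : ℝ → 𝒴 → ℝ, (∀ (y : 𝒴) (a b : ℝ), |l a y - l b y| ≤ ρ * |a - b|) →
      ∀ (μ : Measure ((Fin d → ℝ) × 𝒴)) (_ : IsProbabilityMeasure μ),
      (∀ᵐ q ∂μ, ∀ i, |q.1 i| ≤ Xb) →
      ∀ (n : ℕ), 0 < n →
      (∀ w : Fin d → ℝ, (∑ i, |w i|) ≤ W →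
        Integrable (fun q : (Fin d → ℝ) × 𝒴 => l (∑ i, w i * q.1 i) q.2) μ) →
      ∀ erm : (Fin n → (Fin d → ℝ) × 𝒴) → (Fin d → ℝ),
      (∀ S, (∑ i, |erm S i|) ≤ W) →
      (∀ (S : Fin n → (Fin d → ℝ) × 𝒴) (w : Fin d → ℝ), (∑ i, |w i|) ≤ W →
        ∑ t, l (∑ i, erm S i * (S t).1 i) (S t).2 ≤ ∑ t, l (∑ i, w i * (S t).1 i) (S t).2) →
      Integrable (fun S : Fin n → (Fin d → ℝ) × 𝒴 => ∫ q, l (∑ i, erm S i * q.1 i) q.2 ∂μ)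
        (Measure.pi fun _ : Fin n => μ) →
      ∀ w : Fin d → ℝ, (∑ i, |w i|) ≤ W →
        (∫ S, (∫ q, l (∑ i, erm S i * q.1 i) q.2 ∂μ) ∂(Measure.pi fun _ : Fin n => μ))
            - ∫ q, l (∑ i, w i * q.1 i) q.2 ∂μ ≤
          C * ρ * Xb * W * Real.sqrt (Real.log d / n) := by
  refine ⟨4, by norm_num, ?_⟩
  intro d hd 𝒴 _ W Xb ρ hW hXb hρ l hl μ _ hX n hn hint erm herm hmin herm_int w hw
  refine le_of_forall_pos_le_add fun η hη => ?_
  set ε := η / (2 * ρ * Xb + 1)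
  obtain ⟨N, hNW, hnet⟩ := exists_finset_l1_net d W (ε := ε) (by positivity)
  have : Nonempty N := let ⟨v, hv, _⟩ := hnet 0 (by simpa using hW.le); ⟨⟨v, hv⟩⟩
  have hintN : ∀ v : N, Integrable (linearLoss l v) μ := fun v => hint v (hNW v v.2)
  calc _ ≤ ∫ S, ⨆ v : N, (∫ q, linearLoss l v q ∂μ - empMean (linearLoss l v) S)
          ∂(Measure.pi fun _ : Fin n => μ) + 2 * (ρ * (ε * Xb)) :=
        integral_risk_erm_sub_le (f := linearLoss l) (K := {v | ∑ i, |v i| ≤ W}) hn hint hX hNW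
          (fun u hu => let ⟨v, hv, huv⟩ := hnet u hu
            ⟨v, hv, fun q hq => (abs_linearLoss_sub_le hρ hl u v hq).trans (by gcongr)⟩)
          herm hmin herm_int hw
    _ ≤ 2 * (ρ * W * Xb * √(2 * log (2 * d) / n)) + 2 * (ρ * (ε * Xb)) := by
        gcongr ?_ + _
        exact (integral_ciSup_sub_empMean_le_two_mul_empRademacher hn hintN).trans
          (by gcongr
              exact integral_empRademacher_linearLoss_le hn (by omega) hρ hl hNW hXb hX hintN)
    _ ≤ 4 * ρ * Xb * W * √(log d / n) + η := by
        have hsqrt := mul_le_mul_of_nonneg_left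
          (sqrt_two_mul_log_two_mul_div_le (d := d) (by exact_mod_cast (by omega : 2 ≤ d)) n)
          (by positivity : 0 ≤ 2 * (ρ * W * Xb))
        have hε : ε * (2 * ρ * Xb + 1) = η := div_mul_cancel₀ η (by positivity)
        have hε0 : 0 < ε := by positivity
        linarith
end

section
/- Let d ≥ 3, k ≥ 1, W > 0, X > 0, and let 𝒲 = {M ∈ ℝ^{k×d} : ‖M‖_{2,1} ≤ W}. Let l_1, …, l_n : 𝒲 → ℝ be convex functions that are X-Lipschitz with respect to the group norm ‖·‖_{2,1}, i.e., each admits at every point a subgradient V with ‖V‖_{2,∞} ≤ X, where ‖·‖_{2,∞} is the dual norm of ‖·‖_{2,1}. Then there is a sequence W_1, …, W_n ∈ 𝒲, where each W_t is determined by l_1, …, l_{t−1} only, such that (1/n) Σ_{t=1}^n l_t(W_t) − min_{M ∈ 𝒲} (1/n) Σ_{t=1}^n l_t(M) ≤ C · X · W · √(ln(d)/n) for a universal constant C > 0. -/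
open scoped BigOperators
open Finset
open scoped RealInnerProductSpace

/-- The Euclidean norm of the `j`-th column of a matrix. -/
noncomputable def col2 {k d : ℕ} (M : Matrix (Fin k) (Fin d) ℝ) (j : Fin d) : ℝ :=
  Real.sqrt (∑ i, M i j ^ 2)

/-- The group norm `‖M‖_{2,1} = ∑ j ‖Mʲ‖₂` (sum of Euclidean column norms). -/
noncomputable def grpNorm21 {k d : ℕ} (M : Matrix (Fin k) (Fin d) ℝ) : ℝ :=
  ∑ j, col2 M j

noncomputable section OCOaux

abbrev Evec (k : ℕ) := EuclideanSpace ℝ (Fin k)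

def colv {k d : ℕ} (M : Matrix (Fin k) (Fin d) ℝ) (j : Fin d) : Evec k := WithLp.toLp 2 (fun i => M i j)

lemma col2_eq_norm {k d : ℕ} (M : Matrix (Fin k) (Fin d) ℝ) (j : Fin d) :
    col2 M j = ‖colv M j‖ := by
  rw [col2, EuclideanSpace.norm_eq]
  congr 1
  refine Finset.sum_congr rfl fun i _ => ?_
  rw [Real.norm_eq_abs, sq_abs]; rfl

lemma inner_colv {k d : ℕ} (V N : Matrix (Fin k) (Fin d) ℝ) (j : Fin d) :
    ⟪colv V j, colv N j⟫ = ∑ i, V i j * N i j := by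
  simp [colv, PiLp.inner_apply, RCLike.inner_apply, mul_comm]

lemma double_sum_eq {k d : ℕ} (V N : Matrix (Fin k) (Fin d) ℝ) :
    ∑ i, ∑ j, V i j * N i j = ∑ j, ⟪colv V j, colv N j⟫ := by
  rw [Finset.sum_comm]
  exact Finset.sum_congr rfl fun j _ => (inner_colv V N j).symm

/-- projection onto the ball of radius `W`. -/
def projW {k : ℕ} (W : ℝ) (u : Evec k) : Evec k :=
  if ‖u‖ ≤ W then u else (W / ‖u‖) • u

lemma norm_projW_le {k : ℕ} (W : ℝ) (hW : 0 ≤ W) (u : Evec k) : ‖projW W u‖ ≤ W := by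
  rw [projW]
  split_ifs with h
  · exact h
  · push_neg at h
    have hu : 0 < ‖u‖ := lt_of_le_of_lt hW h
    rw [norm_smul, Real.norm_eq_abs, abs_of_nonneg (div_nonneg hW hu.le),
      div_mul_cancel₀ _ hu.ne']

lemma projW_contract {k : ℕ} (W : ℝ) (hW : 0 ≤ W) (x u : Evec k) (hu : ‖u‖ ≤ W) :
    ‖projW W x - u‖ ≤ ‖x - u‖ := by
  rw [projW]
  split_ifs with h
  · exact le_refl _
  · push_neg at h
    have hx : 0 < ‖x‖ := lt_of_le_of_lt hW h
    set c : ℝ := W / ‖x‖ with hc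
    have hc0 : 0 ≤ c := div_nonneg hW hx.le
    have hc1 : c ≤ 1 := by
      rw [hc, div_le_one hx]; exact h.le
    have hsq : ‖c • x - u‖ ^ 2 ≤ ‖x - u‖ ^ 2 := by
      rw [norm_sub_sq_real, norm_sub_sq_real, norm_smul, real_inner_smul_left]
      have hxu : ⟪x, u⟫ ≤ c * ‖x‖ ^ 2 := by
        have h1 : ⟪x, u⟫ ≤ ‖x‖ * ‖u‖ := real_inner_le_norm x u
        have h2 : ‖x‖ * ‖u‖ ≤ ‖x‖ * W := by
          exact mul_le_mul_of_nonneg_left hu hx.le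
        have : c * ‖x‖ ^ 2 = W * ‖x‖ := by
          rw [hc]; field_simp
        nlinarith
      have habs : ‖(c : ℝ)‖ = c := by rw [Real.norm_eq_abs, abs_of_nonneg hc0]
      rw [habs]
      nlinarith [mul_le_mul_of_nonneg_left hxu (sub_nonneg.2 hc1),
        mul_nonneg (sq_nonneg (1 - c)) (sq_nonneg ‖x‖)]
    calc ‖c • x - u‖ = Real.sqrt (‖c • x - u‖ ^ 2) := by
            rw [Real.sqrt_sq (norm_nonneg _)]
      _ ≤ Real.sqrt (‖x - u‖ ^ 2) := Real.sqrt_le_sqrt hsq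
      _ = ‖x - u‖ := Real.sqrt_sq (norm_nonneg _)

lemma exp_le_quad {z : ℝ} (h : |z| ≤ 1) : Real.exp z ≤ 1 + z + z ^ 2 := by
  have hb := Real.exp_bound h (n := 2) (by norm_num)
  have hsum : ∑ m ∈ Finset.range 2, z ^ m / (Nat.factorial m : ℝ) = 1 + z := by
    simp [Finset.sum_range_succ, Nat.factorial]
  rw [hsum] at hb
  have h1 : Real.exp z - (1 + z) ≤ |z| ^ 2 * ((3 : ℝ) / (2 * 2)) := by
    calc Real.exp z - (1 + z) ≤ |Real.exp z - (1 + z)| := le_abs_self _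
      _ ≤ |z| ^ 2 * ((2 : ℕ).succ / ((Nat.factorial 2 : ℝ) * 2)) := hb
      _ = |z| ^ 2 * ((3 : ℝ) / (2 * 2)) := by norm_num [Nat.factorial]
  have h2 : |z| ^ 2 = z ^ 2 := sq_abs z
  nlinarith [sq_nonneg z]







def hp (d : ℕ) (η : ℝ) (G : Fin d → ℝ) (j : Fin d) : ℝ :=
  Real.exp (-(η * G j)) / ∑ j', Real.exp (-(η * G j'))

lemma Zpos (d : ℕ) (hd : 0 < d) (η : ℝ) (G : Fin d → ℝ) :
    0 < ∑ j', Real.exp (-(η * G j')) :=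
  Finset.sum_pos (fun j _ => Real.exp_pos _) (by simp [Finset.univ_nonempty_iff, Fin.pos_iff_nonempty.mp hd])

lemma hp_nonneg (d : ℕ) (η : ℝ) (G : Fin d → ℝ) (j : Fin d) : 0 ≤ hp d η G j :=
  div_nonneg (Real.exp_pos _).le (Finset.sum_nonneg fun j' _ => (Real.exp_pos _).le)

lemma hp_sum_one (d : ℕ) (hd : 0 < d) (η : ℝ) (G : Fin d → ℝ) :
    ∑ j, hp d η G j = 1 := by
  simp only [hp]
  rw [← Finset.sum_div, div_self (Zpos d hd η G).ne']

lemma hedge_regret (d n : ℕ) (hd : 0 < d) (η B : ℝ) (hη : 0 < η) (hηB : η * B ≤ 1)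
    (hB : 0 ≤ B)
    (g : ℕ → Fin d → ℝ) (hg : ∀ t < n, ∀ j, |g t j| ≤ B) (j0 : Fin d) :
    ∑ t ∈ range n, ∑ j, hp d η (fun j' => ∑ s ∈ range t, g s j') j * g t j
      ≤ (∑ t ∈ range n, g t j0) + Real.log d / η + η * n * B ^ 2 := by
  set Gt : ℕ → Fin d → ℝ := fun t j => ∑ s ∈ range t, g s j with hGt
  set Z : ℕ → ℝ := fun t => ∑ j, Real.exp (-(η * Gt t j)) with hZ
  have hZpos : ∀ t, 0 < Z t := fun t => Zpos d hd η (Gt t)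
  set P : ℕ → ℝ := fun t => ∑ j, hp d η (Gt t) j * g t j with hP
  -- step inequality on logs
  have step : ∀ t < n, Real.log (Z (t + 1)) ≤ Real.log (Z t) + (-(η * P t) + η ^ 2 * B ^ 2) := by
    intro t ht
    have key : Z (t + 1) ≤ Z t * Real.exp (-(η * P t) + η ^ 2 * B ^ 2) := by
      have e1 : Z (t + 1) = ∑ j, Real.exp (-(η * Gt t j)) * Real.exp (-(η * g t j)) := by
        refine Finset.sum_congr rfl fun j _ => ?_
        rw [← Real.exp_add]
        congr 1
        simp only [hGt, Finset.sum_range_succ]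
        ring
      have e2 : Z (t + 1) ≤ ∑ j, Real.exp (-(η * Gt t j)) * (1 + (-(η * g t j)) + (η * g t j) ^ 2) := by
        rw [e1]
        refine Finset.sum_le_sum fun j _ => ?_
        refine mul_le_mul_of_nonneg_left ?_ (Real.exp_pos _).le
        have habs : |(-(η * g t j))| ≤ 1 := by
          rw [abs_neg, abs_mul, abs_of_pos hη]
          calc η * |g t j| ≤ η * B := mul_le_mul_of_nonneg_left (hg t ht j) hη.le
            _ ≤ 1 := hηB
        have := exp_le_quad habs
        rw [neg_sq] at this
        exact this
      have e3 : ∑ j, Real.exp (-(η * Gt t j)) * (1 + (-(η * g t j)) + (η * g t j) ^ 2)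
          ≤ Z t * (1 + (-(η * P t) + η ^ 2 * B ^ 2)) := by
        have hw : ∀ j, Real.exp (-(η * Gt t j)) = Z t * hp d η (Gt t) j := by
          intro j
          rw [hp, mul_div_cancel₀]
          exact (hZpos t).ne'
        calc ∑ j, Real.exp (-(η * Gt t j)) * (1 + (-(η * g t j)) + (η * g t j) ^ 2)
            = ∑ j, (Z t * hp d η (Gt t) j) * (1 + (-(η * g t j)) + (η * g t j) ^ 2) := by
              refine Finset.sum_congr rfl fun j _ => ?_; rw [hw j]
          _ = Z t * ∑ j, hp d η (Gt t) j * (1 + (-(η * g t j)) + (η * g t j) ^ 2) := by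
              rw [Finset.mul_sum]; refine Finset.sum_congr rfl fun j _ => by ring
          _ ≤ Z t * (1 + (-(η * P t) + η ^ 2 * B ^ 2)) := by
              refine mul_le_mul_of_nonneg_left ?_ (hZpos t).le
              have expand : ∑ j, hp d η (Gt t) j * (1 + (-(η * g t j)) + (η * g t j) ^ 2)
                  = (∑ j, hp d η (Gt t) j) - η * P t + η ^ 2 * ∑ j, hp d η (Gt t) j * g t j ^ 2 := by
                rw [hP, Finset.mul_sum, Finset.mul_sum]
                rw [← Finset.sum_sub_distrib, ← Finset.sum_add_distrib]
                refine Finset.sum_congr rfl fun j _ => by ring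
              rw [expand, hp_sum_one d hd]
              have hquad : ∑ j, hp d η (Gt t) j * g t j ^ 2 ≤ B ^ 2 := by
                calc ∑ j, hp d η (Gt t) j * g t j ^ 2
                    ≤ ∑ j, hp d η (Gt t) j * B ^ 2 := by
                      refine Finset.sum_le_sum fun j _ => ?_
                      refine mul_le_mul_of_nonneg_left ?_ (hp_nonneg d η (Gt t) j)
                      have := hg t ht j
                      calc g t j ^ 2 = |g t j| ^ 2 := (sq_abs _).symm
                        _ ≤ B ^ 2 := by nlinarith [abs_nonneg (g t j)]
                  _ = B ^ 2 := by rw [← Finset.sum_mul, hp_sum_one d hd, one_mul]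
              nlinarith [sq_nonneg η]
      calc Z (t + 1) ≤ Z t * (1 + (-(η * P t) + η ^ 2 * B ^ 2)) := le_trans e2 e3
        _ ≤ Z t * Real.exp (-(η * P t) + η ^ 2 * B ^ 2) := by
            refine mul_le_mul_of_nonneg_left ?_ (hZpos t).le
            linarith [Real.add_one_le_exp (-(η * P t) + η ^ 2 * B ^ 2)]
    calc Real.log (Z (t + 1)) ≤ Real.log (Z t * Real.exp (-(η * P t) + η ^ 2 * B ^ 2)) :=
          Real.log_le_log (hZpos (t + 1)) key
      _ = Real.log (Z t) + (-(η * P t) + η ^ 2 * B ^ 2) := by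
          rw [Real.log_mul (hZpos t).ne' (Real.exp_pos _).ne', Real.log_exp]
  -- telescope
  have tele : Real.log (Z n) - Real.log (Z 0) ≤ ∑ t ∈ range n, (-(η * P t) + η ^ 2 * B ^ 2) := by
    rw [← Finset.sum_range_sub (fun t => Real.log (Z t))]
    refine Finset.sum_le_sum fun t ht => ?_
    have := step t (Finset.mem_range.mp ht)
    linarith
  have hZ0 : Real.log (Z 0) = Real.log d := by
    simp [hZ, hGt]
  have hlow : -(η * Gt n j0) ≤ Real.log (Z n) := by
    have h1 : Real.exp (-(η * Gt n j0)) ≤ Z n :=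
      Finset.single_le_sum (f := fun j => Real.exp (-(η * Gt n j))) (fun j _ => (Real.exp_pos _).le) (Finset.mem_univ j0)
    calc -(η * Gt n j0) = Real.log (Real.exp (-(η * Gt n j0))) := (Real.log_exp _).symm
      _ ≤ Real.log (Z n) := Real.log_le_log (Real.exp_pos _) h1
  have hsum : ∑ t ∈ range n, (-(η * P t) + η ^ 2 * B ^ 2)
      = -(η * ∑ t ∈ range n, P t) + n * (η ^ 2 * B ^ 2) := by
    rw [Finset.sum_add_distrib, Finset.mul_sum]
    simp [Finset.sum_neg_distrib]
  have main : -(η * Gt n j0) ≤ Real.log d + (-(η * ∑ t ∈ range n, P t) + n * (η ^ 2 * B ^ 2)) := by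
    rw [← hsum, ← hZ0]
    linarith [tele, hlow]
  have hdiv : ∑ t ∈ range n, P t - Gt n j0 ≤ (Real.log d + n * (η ^ 2 * B ^ 2)) / η := by
    rw [le_div_iff₀ hη]
    nlinarith [main]
  have : (Real.log d + n * (η ^ 2 * B ^ 2)) / η = Real.log d / η + η * n * B ^ 2 := by
    field_simp
  rw [this] at hdiv
  simp only [hGt] at hdiv
  linarith [hdiv]




lemma ogd_regret {k : ℕ} (n : ℕ) (W X c : ℝ) (hW : 0 ≤ W) (hX : 0 ≤ X) (hc : 0 < c)
    (v : ℕ → Evec k) (hv : ∀ t < n, ‖v t‖ ≤ X)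
    (u : ℕ → Evec k) (hu0 : u 0 = 0)
    (hstep : ∀ t < n, u (t + 1) = projW W (u t - c • v t))
    (w : Evec k) (hw : ‖w‖ ≤ W) :
    ∑ t ∈ range n, ⟪v t, u t - w⟫ ≤ W ^ 2 / (2 * c) + c * n * X ^ 2 / 2 := by
  have key : ∀ t < n, 2 * c * ⟪v t, u t - w⟫
      ≤ ‖u t - w‖ ^ 2 - ‖u (t + 1) - w‖ ^ 2 + c ^ 2 * ‖v t‖ ^ 2 := by
    intro t ht
    have h1 : ‖u (t + 1) - w‖ ≤ ‖(u t - c • v t) - w‖ := by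
      rw [hstep t ht]
      exact projW_contract W hW _ w hw
    have h2 : ‖u (t + 1) - w‖ ^ 2 ≤ ‖(u t - c • v t) - w‖ ^ 2 := by
      exact pow_le_pow_left₀ (norm_nonneg _) h1 2
    have h3 : ‖(u t - c • v t) - w‖ ^ 2
        = ‖u t - w‖ ^ 2 - 2 * (c * ⟪v t, u t - w⟫) + c ^ 2 * ‖v t‖ ^ 2 := by
      have e : (u t - c • v t) - w = (u t - w) - c • v t := by abel
      rw [e, norm_sub_sq_real, real_inner_smul_right, norm_smul, Real.norm_eq_abs]
      rw [real_inner_comm]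
      rw [mul_pow, sq_abs]
    nlinarith [h2, h3]
  have sum_key : ∑ t ∈ range n, 2 * c * ⟪v t, u t - w⟫
      ≤ (‖u 0 - w‖ ^ 2 - ‖u n - w‖ ^ 2) + c ^ 2 * ∑ t ∈ range n, ‖v t‖ ^ 2 := by
    have tele : ∑ t ∈ range n, (‖u t - w‖ ^ 2 - ‖u (t + 1) - w‖ ^ 2)
        = ‖u 0 - w‖ ^ 2 - ‖u n - w‖ ^ 2 :=
      Finset.sum_range_sub' (fun t => ‖u t - w‖ ^ 2) n
    calc ∑ t ∈ range n, 2 * c * ⟪v t, u t - w⟫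
        ≤ ∑ t ∈ range n, ((‖u t - w‖ ^ 2 - ‖u (t + 1) - w‖ ^ 2) + c ^ 2 * ‖v t‖ ^ 2) :=
          Finset.sum_le_sum fun t ht => key t (Finset.mem_range.mp ht)
      _ = (‖u 0 - w‖ ^ 2 - ‖u n - w‖ ^ 2) + c ^ 2 * ∑ t ∈ range n, ‖v t‖ ^ 2 := by
          rw [Finset.sum_add_distrib, tele, Finset.mul_sum]
  have hD0 : ‖u 0 - w‖ ^ 2 ≤ W ^ 2 := by
    rw [hu0, zero_sub, norm_neg]
    exact pow_le_pow_left₀ (norm_nonneg _) hw 2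
  have hVsum : ∑ t ∈ range n, ‖v t‖ ^ 2 ≤ n * X ^ 2 := by
    calc ∑ t ∈ range n, ‖v t‖ ^ 2 ≤ ∑ _t ∈ range n, X ^ 2 :=
          Finset.sum_le_sum fun t ht =>
            pow_le_pow_left₀ (norm_nonneg _) (hv t (Finset.mem_range.mp ht)) 2
      _ = n * X ^ 2 := by rw [Finset.sum_const, card_range]; ring
  have h2c : 0 < 2 * c := by linarith
  have hfin : 2 * c * ∑ t ∈ range n, ⟪v t, u t - w⟫ ≤ W ^ 2 + c ^ 2 * (n * X ^ 2) := by
    rw [Finset.mul_sum]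
    calc ∑ t ∈ range n, 2 * c * ⟪v t, u t - w⟫
        ≤ (‖u 0 - w‖ ^ 2 - ‖u n - w‖ ^ 2) + c ^ 2 * ∑ t ∈ range n, ‖v t‖ ^ 2 := sum_key
      _ ≤ W ^ 2 + c ^ 2 * (n * X ^ 2) := by
          have := sq_nonneg ‖u n - w‖
          nlinarith [hVsum, hD0, sq_nonneg c]
  have h4 : (0:ℝ) < 2 * c * 2 := by linarith
  rw [div_add_div _ _ (by linarith : (2*c) ≠ 0) two_ne_zero, le_div_iff₀ h4]
  nlinarith [hfin]

open scoped Classical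



/-- A measurable choice of subgradient (via choice), if one exists. -/
def sgrad {k d : ℕ} (W X : ℝ) (f : Matrix (Fin k) (Fin d) ℝ → ℝ)
    (M : Matrix (Fin k) (Fin d) ℝ) : Matrix (Fin k) (Fin d) ℝ :=
  if h : ∃ V : Matrix (Fin k) (Fin d) ℝ, (∀ j, col2 V j ≤ X) ∧
      ∀ U : Matrix (Fin k) (Fin d) ℝ, grpNorm21 U ≤ W →
        f M + ∑ i, ∑ j, V i j * (U i j - M i j) ≤ f U then h.choose else 0

lemma sgrad_spec {k d : ℕ} (W X : ℝ) (f : Matrix (Fin k) (Fin d) ℝ → ℝ)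
    (M : Matrix (Fin k) (Fin d) ℝ)
    (h : ∃ V : Matrix (Fin k) (Fin d) ℝ, (∀ j, col2 V j ≤ X) ∧
      ∀ U : Matrix (Fin k) (Fin d) ℝ, grpNorm21 U ≤ W →
        f M + ∑ i, ∑ j, V i j * (U i j - M i j) ≤ f U) :
    (∀ j, col2 (sgrad W X f M) j ≤ X) ∧
      ∀ U : Matrix (Fin k) (Fin d) ℝ, grpNorm21 U ≤ W →
        f M + ∑ i, ∑ j, (sgrad W X f M) i j * (U i j - M i j) ≤ f U := by
  simp only [sgrad]
  rw [dif_pos h]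
  exact h.choose_spec

/-- The matrix played from the current state. -/
def playM {k d : ℕ} (η : ℝ) (st : (Fin d → Evec k) × (Fin d → ℝ)) :
    Matrix (Fin k) (Fin d) ℝ :=
  fun i j => hp d η st.2 j * st.1 j i

/-- One step of the combined Hedge + per-column projected-OGD algorithm. -/
def stepSt {k d : ℕ} (W X η c : ℝ) (f : Matrix (Fin k) (Fin d) ℝ → ℝ)
    (st : (Fin d → Evec k) × (Fin d → ℝ)) : (Fin d → Evec k) × (Fin d → ℝ) :=
  (fun j => projW W (st.1 j - c • colv (sgrad W X f (playM η st)) j),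
   fun j => st.2 j + ⟪colv (sgrad W X f (playM η st)) j, st.1 j⟫)

def iterSt {k d : ℕ} (W X η c : ℝ) (l : ℕ → Matrix (Fin k) (Fin d) ℝ → ℝ) :
    ℕ → (Fin d → Evec k) × (Fin d → ℝ)
  | 0 => (fun _ => 0, fun _ => 0)
  | (t + 1) => stepSt W X η c (l t) (iterSt W X η c l t)

lemma iterSt_succ {k d : ℕ} (W X η c : ℝ) (l : ℕ → Matrix (Fin k) (Fin d) ℝ → ℝ) (t : ℕ) :
    iterSt W X η c l (t + 1) = stepSt W X η c (l t) (iterSt W X η c l t) := rfl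

lemma iterSt_congr {k d : ℕ} (W X η c : ℝ) (l l' : ℕ → Matrix (Fin k) (Fin d) ℝ → ℝ) :
    ∀ t : ℕ, (∀ s < t, l s = l' s) → iterSt W X η c l t = iterSt W X η c l' t := by
  intro t
  induction t with
  | zero => intro _; rfl
  | succ t ih =>
    intro h
    rw [iterSt_succ, iterSt_succ, ih (fun s hs => h s (Nat.lt_succ_of_lt hs)),
      h t (Nat.lt_succ_self t)]

lemma grpNorm21_playM {k d : ℕ} (hd : 0 < d) (W η : ℝ) (hW : 0 ≤ W)
    (st : (Fin d → Evec k) × (Fin d → ℝ)) (hst : ∀ j, ‖st.1 j‖ ≤ W) :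
    grpNorm21 (playM η st) ≤ W := by
  have hcol : ∀ j, colv (playM η st) j = hp d η st.2 j • st.1 j := by
    intro j; ext i; simp [colv, playM]
  rw [grpNorm21]
  calc ∑ j, col2 (playM η st) j = ∑ j, hp d η st.2 j * ‖st.1 j‖ := by
        refine Finset.sum_congr rfl fun j _ => ?_
        rw [col2_eq_norm, hcol j, norm_smul, Real.norm_eq_abs,
          abs_of_nonneg (hp_nonneg d η st.2 j)]
    _ ≤ ∑ j, hp d η st.2 j * W :=
        Finset.sum_le_sum fun j _ =>
          mul_le_mul_of_nonneg_left (hst j) (hp_nonneg d η st.2 j)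
    _ = W := by rw [← Finset.sum_mul, hp_sum_one d hd, one_mul]



end OCOaux
/-- Online convex optimization over the group-norm ball `{M : ‖M‖_{2,1} ≤ W}` with losses
that are `X`-Lipschitz w.r.t. `‖·‖_{2,∞}` (each admits at every point a subgradient `V`
with `‖V‖_{2,∞} = max_j ‖Vʲ‖₂ ≤ X`): for a universal constant `C > 0` there is an online
algorithm whose plays depend only on previously seen losses, whose iterates stay in the
ball, and whose average regret is at most `C · X · W · √(ln d / n)`. -/
theorem stmt13 :
    ∃ C : ℝ, 0 < C ∧
      ∀ (k d : ℕ), 1 ≤ k → 3 ≤ d →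
      ∀ (W X : ℝ), 0 < W → 0 < X →
      ∀ (n : ℕ), 0 < n →
      ∃ A : (t : ℕ) → (Fin t → (Matrix (Fin k) (Fin d) ℝ → ℝ)) → Matrix (Fin k) (Fin d) ℝ,
        ∀ l : Fin n → Matrix (Fin k) (Fin d) ℝ → ℝ,
          (∀ t, ConvexOn ℝ {M : Matrix (Fin k) (Fin d) ℝ | grpNorm21 M ≤ W} (l t)) →
          (∀ (t : Fin n) (M : Matrix (Fin k) (Fin d) ℝ), grpNorm21 M ≤ W →
            ∃ V : Matrix (Fin k) (Fin d) ℝ, (∀ j, col2 V j ≤ X) ∧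
              ∀ U : Matrix (Fin k) (Fin d) ℝ, grpNorm21 U ≤ W →
                l t M + ∑ i, ∑ j, V i j * (U i j - M i j) ≤ l t U) →
          (∀ t : Fin n,
              grpNorm21 (A t.1 fun s : Fin t.1 => l (Fin.castLE t.isLt.le s)) ≤ W) ∧
            ∀ U : Matrix (Fin k) (Fin d) ℝ, grpNorm21 U ≤ W →
              (1 / n : ℝ) *
                    (∑ t : Fin n, l t (A t.1 fun s : Fin t.1 => l (Fin.castLE t.isLt.le s)))
                  - (1 / n : ℝ) * ∑ t : Fin n, l t U ≤
                C * X * W * Real.sqrt (Real.log d / n) := by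
  classical
  refine ⟨4, by norm_num, ?_⟩
  intro k d hk hd W X hW hX n hn
  have hd0 : 0 < d := by omega
  have hd3 : (3 : ℝ) ≤ (d : ℝ) := by exact_mod_cast hd
  have hn1 : (1 : ℝ) ≤ (n : ℝ) := by exact_mod_cast hn
  have hnpos : (0 : ℝ) < (n : ℝ) := by linarith
  have hlogd : 1 ≤ Real.log d := by
    have hexp3 : Real.exp 1 ≤ 3 := by
      have := Real.exp_one_lt_d9; linarith
    calc (1 : ℝ) = Real.log (Real.exp 1) := (Real.log_exp 1).symm
      _ ≤ Real.log 3 := Real.log_le_log (Real.exp_pos 1) hexp3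
      _ ≤ Real.log d := Real.log_le_log (by norm_num) hd3
  have hlog0 : 0 < Real.log d := lt_of_lt_of_le one_pos hlogd
  set sl : ℝ := Real.sqrt (Real.log d) with hsl
  set sn : ℝ := Real.sqrt n with hsn
  have hsl1 : 1 ≤ sl := by
    rw [hsl, show (1:ℝ) = Real.sqrt 1 from (Real.sqrt_one).symm]
    exact Real.sqrt_le_sqrt hlogd
  have hsl0 : 0 < sl := lt_of_lt_of_le one_pos hsl1
  have hsn1 : 1 ≤ sn := by
    rw [hsn, show (1:ℝ) = Real.sqrt 1 from (Real.sqrt_one).symm]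
    exact Real.sqrt_le_sqrt hn1
  have hsn0 : 0 < sn := lt_of_lt_of_le one_pos hsn1
  have hsn2 : sn ^ 2 = (n : ℝ) := Real.sq_sqrt (by positivity)
  have hsl2 : sl ^ 2 = Real.log d := Real.sq_sqrt hlog0.le
  have hsd : Real.sqrt (Real.log d / n) = sl / sn := Real.sqrt_div hlog0.le _
  by_cases hcase : Real.log d ≤ (n : ℝ)
  · -- main case: Hedge over columns + per-column projected OGD
    set η : ℝ := sl / (sn * (X * W)) with hη
    set c : ℝ := W / (sn * X) with hc
    have hη0 : 0 < η := by positivity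
    have hc0 : 0 < c := by positivity
    refine ⟨fun t ls =>
      playM η (iterSt W X η c (fun s => if h : s < t then ls ⟨s, h⟩ else 0) t), ?_⟩
    intro l _hconv hsub
    set l' : ℕ → Matrix (Fin k) (Fin d) ℝ → ℝ :=
      fun s => if h : s < n then l ⟨s, h⟩ else 0 with hl'
    set St : ℕ → (Fin d → Evec k) × (Fin d → ℝ) := fun t => iterSt W X η c l' t with hSt
    set Mt : ℕ → Matrix (Fin k) (Fin d) ℝ := fun t => playM η (St t) with hMt
    set Vm : ℕ → Matrix (Fin k) (Fin d) ℝ := fun t => sgrad W X (l' t) (Mt t) with hVm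
    set gv : ℕ → Fin d → ℝ := fun t j => ⟪colv (Vm t) j, (St t).1 j⟫ with hgv
    have hAeq : ∀ t : Fin n,
        playM η (iterSt W X η c
          (fun s : ℕ => if h : s < t.1 then l (Fin.castLE t.isLt.le ⟨s, h⟩) else 0) t.1)
          = Mt t.1 := by
      intro t
      refine congrArg (playM η) (iterSt_congr W X η c _ l' t.1 fun s hs => ?_)
      have hsn' : s < n := lt_of_lt_of_le hs t.isLt.le
      simp only [dif_pos hs, hl', dif_pos hsn']
      rfl
    have hnormfst : ∀ t j, ‖(St t).1 j‖ ≤ W := by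
      intro t
      induction t with
      | zero =>
        intro j
        show ‖(0 : Evec k)‖ ≤ W
        rw [norm_zero]; exact hW.le
      | succ t _ih =>
        intro j
        exact norm_projW_le W hW.le _
    have hMem : ∀ t, grpNorm21 (Mt t) ≤ W := fun t =>
      grpNorm21_playM hd0 W η hW.le (St t) (hnormfst t)
    have hGsnd : ∀ t, (St t).2 = fun j => ∑ s ∈ Finset.range t, gv s j := by
      intro t
      induction t with
      | zero =>
        funext j
        show (0 : ℝ) = ∑ s ∈ Finset.range 0, gv s j
        simp
      | succ t ih =>
        funext j
        have e : (St (t + 1)).2 j = (St t).2 j + gv t j := rfl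
        rw [e, ih, Finset.sum_range_succ]
    have hfststep : ∀ t j, (St (t + 1)).1 j = projW W ((St t).1 j - c • colv (Vm t) j) :=
      fun t j => rfl
    have hspec : ∀ t, t < n →
        (∀ j, col2 (Vm t) j ≤ X) ∧
          ∀ U : Matrix (Fin k) (Fin d) ℝ, grpNorm21 U ≤ W →
            l' t (Mt t) + ∑ i, ∑ j, (Vm t) i j * (U i j - (Mt t) i j) ≤ l' t U := by
      intro t ht
      have hl : l' t = l ⟨t, ht⟩ := dif_pos ht
      have hex := hsub ⟨t, ht⟩ (Mt t) (hMem t)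
      rw [← hl] at hex
      exact sgrad_spec W X (l' t) (Mt t) hex
    have hgbound : ∀ t < n, ∀ j, |gv t j| ≤ X * W := by
      intro t ht j
      have h1 : ‖colv (Vm t) j‖ ≤ X := by
        rw [← col2_eq_norm]; exact (hspec t ht).1 j
      calc |gv t j| ≤ ‖colv (Vm t) j‖ * ‖(St t).1 j‖ := abs_real_inner_le_norm _ _
        _ ≤ X * W := mul_le_mul h1 (hnormfst t j) (norm_nonneg _) hX.le
    have hgv' : ∀ (t : ℕ) (j : Fin d), gv t j = ⟪colv (Vm t) j, (St t).1 j⟫ :=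
      fun t j => rfl
    have hMcol : ∀ (t : ℕ) (j : Fin d),
        colv (Mt t) j = hp d η ((St t).2) j • (St t).1 j := by
      intro t j; ext i; simp [colv, hMt, playM]
    have hl'fin : ∀ t : Fin n, l' t.1 = l t := fun t => dif_pos t.isLt
    have hSt0 : ∀ j, (St 0).1 j = 0 := fun j => rfl
    clear_value l' St Mt Vm gv
    have hne : (Finset.univ : Finset (Fin d)).Nonempty := ⟨⟨0, hd0⟩, Finset.mem_univ _⟩
    set S : Fin d → Evec k := fun j => ∑ t ∈ Finset.range n, colv (Vm t) j with hS
    obtain ⟨jstar, _, hjmax⟩ := Finset.exists_max_image Finset.univ (fun j => ‖S j‖) hne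
    set ustar : Evec k := if h : S jstar = 0 then 0 else (-(W / ‖S jstar‖)) • S jstar
      with hustar
    have hustar_norm : ‖ustar‖ ≤ W := by
      rw [hustar]
      split_ifs with h
      · rw [norm_zero]; exact hW.le
      · have hS0 : 0 < ‖S jstar‖ := norm_pos_iff.mpr h
        rw [norm_smul, Real.norm_eq_abs, abs_neg, abs_of_nonneg (div_nonneg hW.le hS0.le),
          div_mul_cancel₀ _ hS0.ne']
    have hustar_inner : ⟪S jstar, ustar⟫ = -(W * ‖S jstar‖) := by
      rw [hustar]
      split_ifs with h
      · rw [inner_zero_right, h, norm_zero, mul_zero, neg_zero]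
      · have hS0 : 0 < ‖S jstar‖ := norm_pos_iff.mpr h
        rw [real_inner_smul_right, real_inner_self_eq_norm_sq]
        field_simp
    clear_value S ustar
    have hogd : ∑ t ∈ Finset.range n, ⟪colv (Vm t) jstar, (St t).1 jstar - ustar⟫
        ≤ W ^ 2 / (2 * c) + c * n * X ^ 2 / 2 := by
      refine ogd_regret n W X c hW.le hX.le hc0 (fun t => colv (Vm t) jstar)
        (fun t ht => ?_) (fun t => (St t).1 jstar) (hSt0 jstar)
        (fun t _ht => hfststep t jstar) ustar hustar_norm
      rw [← col2_eq_norm]; exact (hspec t ht).1 jstar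
    have hogd' : ∑ t ∈ Finset.range n, gv t jstar
        ≤ -(W * ‖S jstar‖) + (W ^ 2 / (2 * c) + c * n * X ^ 2 / 2) := by
      have e : ∀ t : ℕ, gv t jstar
          = ⟪colv (Vm t) jstar, (St t).1 jstar - ustar⟫ + ⟪colv (Vm t) jstar, ustar⟫ := by
        intro t
        rw [hgv' t jstar, inner_sub_right]
        ring
      have e2 : ∑ t ∈ Finset.range n, ⟪colv (Vm t) jstar, ustar⟫ = ⟪S jstar, ustar⟫ := by
        rw [hS, sum_inner]
      calc ∑ t ∈ Finset.range n, gv t jstar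
          = (∑ t ∈ Finset.range n, ⟪colv (Vm t) jstar, (St t).1 jstar - ustar⟫)
            + ∑ t ∈ Finset.range n, ⟪colv (Vm t) jstar, ustar⟫ := by
            rw [← Finset.sum_add_distrib]
            exact Finset.sum_congr rfl fun t _ => e t
        _ ≤ (W ^ 2 / (2 * c) + c * n * X ^ 2 / 2) + ⟪S jstar, ustar⟫ := by
            rw [e2]
            exact add_le_add hogd le_rfl
        _ = -(W * ‖S jstar‖) + (W ^ 2 / (2 * c) + c * n * X ^ 2 / 2) := by
            rw [hustar_inner]; ring
    have hηB : η * (X * W) ≤ 1 := by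
      rw [hη, div_mul_eq_mul_div, div_le_one (by positivity)]
      have hslsn : sl ≤ sn := by
        rw [hsl, hsn]; exact Real.sqrt_le_sqrt hcase
      exact mul_le_mul_of_nonneg_right hslsn (by positivity)
    have hhedge : ∑ t ∈ Finset.range n, ∑ j,
          hp d η (fun j' => ∑ s ∈ Finset.range t, gv s j') j * gv t j
        ≤ (∑ t ∈ Finset.range n, gv t jstar) + Real.log d / η + η * n * (X * W) ^ 2 :=
      hedge_regret d n hd0 η (X * W) hη0 hηB (by positivity) gv hgbound jstar
    refine ⟨fun t => le_of_eq_of_le (congrArg grpNorm21 (hAeq t)) (hMem t.1), ?_⟩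
    intro U hU
    have hper : ∀ t, t < n → l' t (Mt t) - l' t U
        ≤ (∑ j, hp d η ((St t).2) j * gv t j) - ∑ j, ⟪colv (Vm t) j, colv U j⟫ := by
      intro t ht
      have h2 := (hspec t ht).2 U hU
      have hsplit : ∑ i, ∑ j, (Vm t) i j * (U i j - (Mt t) i j)
          = (∑ j, ⟪colv (Vm t) j, colv U j⟫) - ∑ j, hp d η ((St t).2) j * gv t j := by
        have e1 : ∑ i, ∑ j, (Vm t) i j * (U i j - (Mt t) i j)
            = (∑ i, ∑ j, (Vm t) i j * U i j) - ∑ i, ∑ j, (Vm t) i j * (Mt t) i j := by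
          rw [← Finset.sum_sub_distrib]
          refine Finset.sum_congr rfl fun i _ => ?_
          rw [← Finset.sum_sub_distrib]
          refine Finset.sum_congr rfl fun j _ => by ring
        rw [e1, double_sum_eq, double_sum_eq]
        congr 1
        refine Finset.sum_congr rfl fun j _ => ?_
        rw [hMcol t j, real_inner_smul_right, ← hgv' t j]
      rw [hsplit] at h2
      linarith
    have hcomp : -(W * ‖S jstar‖)
        ≤ ∑ t ∈ Finset.range n, ∑ j, ⟪colv (Vm t) j, colv U j⟫ := by
      have hswap : ∑ t ∈ Finset.range n, ∑ j, ⟪colv (Vm t) j, colv U j⟫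
          = ∑ j, ⟪S j, colv U j⟫ := by
        rw [Finset.sum_comm]
        refine Finset.sum_congr rfl fun j _ => ?_
        rw [hS, sum_inner]
      rw [hswap]
      have hperj : ∀ j, -(‖S jstar‖ * col2 U j) ≤ ⟪S j, colv U j⟫ := by
        intro j
        have h1 : |⟪S j, colv U j⟫| ≤ ‖S j‖ * ‖colv U j‖ := abs_real_inner_le_norm _ _
        have h2 : ‖S j‖ * ‖colv U j‖ ≤ ‖S jstar‖ * ‖colv U j‖ :=
          mul_le_mul_of_nonneg_right (hjmax j (Finset.mem_univ j)) (norm_nonneg _)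
        rw [col2_eq_norm]
        linarith [neg_abs_le ⟪S j, colv U j⟫, h1, h2]
      calc -(W * ‖S jstar‖) ≤ -(‖S jstar‖ * grpNorm21 U) := by
            have h3 : ‖S jstar‖ * grpNorm21 U ≤ ‖S jstar‖ * W :=
              mul_le_mul_of_nonneg_left hU (norm_nonneg _)
            linarith [h3]
        _ = ∑ j, -(‖S jstar‖ * col2 U j) := by
            rw [grpNorm21, Finset.mul_sum, ← Finset.sum_neg_distrib]
        _ ≤ ∑ j, ⟪S j, colv U j⟫ := Finset.sum_le_sum fun j _ => hperj j
    have htotal : ∑ t ∈ Finset.range n, (l' t (Mt t) - l' t U)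
        ≤ W ^ 2 / (2 * c) + c * n * X ^ 2 / 2 + Real.log d / η + η * n * (X * W) ^ 2 := by
      have hhedge' : ∑ t ∈ Finset.range n, ∑ j, hp d η ((St t).2) j * gv t j
          ≤ (∑ t ∈ Finset.range n, gv t jstar) + Real.log d / η + η * n * (X * W) ^ 2 := by
        calc ∑ t ∈ Finset.range n, ∑ j, hp d η ((St t).2) j * gv t j
            = ∑ t ∈ Finset.range n, ∑ j,
                hp d η (fun j' => ∑ s ∈ Finset.range t, gv s j') j * gv t j := by
              refine Finset.sum_congr rfl fun t _ => ?_
              rw [hGsnd t]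
          _ ≤ _ := hhedge
      calc ∑ t ∈ Finset.range n, (l' t (Mt t) - l' t U)
          ≤ ∑ t ∈ Finset.range n,
              ((∑ j, hp d η ((St t).2) j * gv t j) - ∑ j, ⟪colv (Vm t) j, colv U j⟫) :=
            Finset.sum_le_sum fun t ht => hper t (Finset.mem_range.mp ht)
        _ = (∑ t ∈ Finset.range n, ∑ j, hp d η ((St t).2) j * gv t j)
            - ∑ t ∈ Finset.range n, ∑ j, ⟪colv (Vm t) j, colv U j⟫ := by
            rw [Finset.sum_sub_distrib]
        _ ≤ _ := by linarith [hhedge', hcomp, hogd']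
    have e1 : W ^ 2 / (2 * c) = W * X * sn / 2 := by
      rw [hc]; field_simp
    have e2 : c * n * X ^ 2 / 2 = W * X * sn / 2 := by
      rw [hc, ← hsn2]; field_simp
    have e3 : Real.log d / η = X * W * sn * sl := by
      rw [hη, ← hsl2]; field_simp
    have e4 : η * n * (X * W) ^ 2 = X * W * sn * sl := by
      rw [hη, ← hsn2]; field_simp
    have htotal2 : ∑ t ∈ Finset.range n, (l' t (Mt t) - l' t U)
        ≤ 3 * (X * W) * (sn * sl) := by
      rw [e1, e2, e3, e4] at htotal
      have hx1 : X * W * sn * 1 ≤ X * W * sn * sl :=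
        mul_le_mul_of_nonneg_left hsl1 (by positivity)
      linarith [htotal, hx1]
    have hsum1 : (∑ t : Fin n, l t
          (playM η (iterSt W X η c
            (fun s : ℕ => if h : s < t.1 then l (Fin.castLE t.isLt.le ⟨s, h⟩) else 0) t.1)))
        = ∑ t ∈ Finset.range n, l' t (Mt t) := by
      rw [← Fin.sum_univ_eq_sum_range (fun s => l' s (Mt s)) n]
      refine Finset.sum_congr rfl fun t _ => ?_
      exact (congrArg (l t) (hAeq t)).trans (by rw [hl'fin t])
    have hsum2 : (∑ t : Fin n, l t U) = ∑ t ∈ Finset.range n, l' t U := by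
      rw [← Fin.sum_univ_eq_sum_range (fun s => l' s U) n]
      refine Finset.sum_congr rfl fun t _ => ?_
      rw [hl'fin t]
    rw [hsd]
    calc (1 / n : ℝ) * (∑ t : Fin n, l t _) - (1 / n : ℝ) * ∑ t : Fin n, l t U
        = (1 / n : ℝ) * ((∑ t ∈ Finset.range n, l' t (Mt t)) - ∑ t ∈ Finset.range n, l' t U) := by
          rw [hsum1, hsum2, mul_sub]
      _ = (1 / n : ℝ) * ∑ t ∈ Finset.range n, (l' t (Mt t) - l' t U) := by
          rw [Finset.sum_sub_distrib]
      _ ≤ (1 / n : ℝ) * (3 * (X * W) * (sn * sl)) := by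
          exact mul_le_mul_of_nonneg_left htotal2 (by positivity)
      _ = 3 * (X * W) * (sl / sn) := by
          rw [← hsn2]; field_simp
      _ ≤ 4 * X * W * (sl / sn) := by
          have hq : 0 ≤ X * W * (sl / sn) := by positivity
          linarith [hq]
  · -- trivial case: play 0
    refine ⟨fun _ _ => 0, ?_⟩
    intro l _hconv hsub
    have hzero : grpNorm21 (0 : Matrix (Fin k) (Fin d) ℝ) = 0 := by
      simp [grpNorm21, col2]
    have hmem0 : grpNorm21 (0 : Matrix (Fin k) (Fin d) ℝ) ≤ W := by
      rw [hzero]; exact hW.le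
    refine ⟨fun _ => hmem0, ?_⟩
    intro U hU
    have hper : ∀ t : Fin n, l t 0 - l t U ≤ X * W := by
      intro t
      obtain ⟨V, hVcol, hVsub⟩ := hsub t 0 hmem0
      have h := hVsub U hU
      simp only [Matrix.zero_apply, sub_zero] at h
      rw [double_sum_eq] at h
      have hj : ∀ j, -⟪colv V j, colv U j⟫ ≤ X * col2 U j := by
        intro j
        have h1 := abs_real_inner_le_norm (colv V j) (colv U j)
        have h2 : ‖colv V j‖ ≤ X := by rw [← col2_eq_norm]; exact hVcol j
        have h3 : (0:ℝ) ≤ ‖colv U j‖ := norm_nonneg _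
        rw [col2_eq_norm]
        have h4 : ‖colv V j‖ * ‖colv U j‖ ≤ X * ‖colv U j‖ :=
          mul_le_mul_of_nonneg_right h2 h3
        linarith [neg_abs_le ⟪colv V j, colv U j⟫, h1, h4]
      have hsum : -(∑ j, ⟪colv V j, colv U j⟫) ≤ X * grpNorm21 U := by
        rw [grpNorm21, Finset.mul_sum, ← Finset.sum_neg_distrib]
        exact Finset.sum_le_sum fun j _ => hj j
      have hXU : X * grpNorm21 U ≤ X * W := mul_le_mul_of_nonneg_left hU hX.le
      linarith
    have hSb : (∑ t : Fin n, l t (0 : Matrix (Fin k) (Fin d) ℝ)) - ∑ t : Fin n, l t U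
        ≤ n * (X * W) := by
      rw [← Finset.sum_sub_distrib]
      calc ∑ t : Fin n, (l t 0 - l t U) ≤ ∑ _t : Fin n, (X * W) :=
            Finset.sum_le_sum fun t _ => hper t
        _ = n * (X * W) := by
            rw [Finset.sum_const, Finset.card_univ, Fintype.card_fin]
            simp [nsmul_eq_mul]
    have hsq1 : (1 : ℝ) ≤ Real.sqrt (Real.log d / n) := by
      have hlt : (n : ℝ) < Real.log d := not_le.mp hcase
      have : (1 : ℝ) ≤ Real.log d / n := (one_le_div hnpos).mpr hlt.le
      rw [show (1:ℝ) = Real.sqrt 1 from (Real.sqrt_one).symm]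
      exact Real.sqrt_le_sqrt this
    rw [← mul_sub]
    have h1 : (1 / n : ℝ) * ((∑ t : Fin n, l t 0) - ∑ t : Fin n, l t U)
        ≤ (1 / n : ℝ) * (n * (X * W)) :=
      mul_le_mul_of_nonneg_left hSb (by positivity)
    have h2 : (1 / n : ℝ) * (n * (X * W)) = X * W := by field_simp
    have h3 : X * W ≤ 4 * X * W * Real.sqrt (Real.log d / n) := by
      have h4 : X * W * 1 ≤ X * W * Real.sqrt (Real.log d / n) :=
        mul_le_mul_of_nonneg_left hsq1 (by positivity)
      linarith [h4, mul_pos hX hW]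
    linarith
end
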